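/- arXiv:1309.3151 — 6 statements merged into one kernel-verified Lean document; each statement's English description precedes it below -/
import Mathlib

section
/- Let A be an n×n matrix over a field F, x ∈ Fⁿ, and r ∈ {1,…,n}. Define y(k) = (A^k x)_r. Then the (n+1)×(n+1) Hankel matrix H_{n+1} with entries (H_{n+1})_{a,b} = y(a+b-2) is singular. -/
open Matrix

/-- The `j × j` Hankel matrix with entry `(a, b)` (0-indexed) equal to `(A^(a+b) x)_r`. -/
def hankelMat {n : ℕ} {F : Type*} [Field F]
    (A : Matrix (Fin n) (Fin n) F) (x : Fin n → F) (r : Fin n) (j : ℕ) :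
    Matrix (Fin j) (Fin j) F :=
  Matrix.of fun a b => ((A ^ ((a : ℕ) + (b : ℕ))) *ᵥ x) r

/-- The `(n+1) × (n+1)` Hankel matrix built from outputs `y k = (A^k x)_r` of an
`n`-dimensional system is singular. -/
theorem hankel_succ_n_singular {n : ℕ} {F : Type*} [Field F]
    (A : Matrix (Fin n) (Fin n) F) (x : Fin n → F) (r : Fin n) :
    (hankelMat A x r (n + 1)).det = 0 := by
  have hfac : hankelMat A x r (n + 1) =
      (Matrix.of fun (a : Fin (n+1)) (i : Fin n) => (A ^ (a : ℕ)) r i) *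
      (Matrix.of fun (i : Fin n) (b : Fin (n+1)) => ((A ^ (b : ℕ)) *ᵥ x) i) := by
    ext a b
    simp only [hankelMat, Matrix.mul_apply, pow_add, Matrix.mulVec, dotProduct,
      Matrix.of_apply, Finset.sum_mul, Finset.mul_sum, mul_assoc]
    exact Finset.sum_comm
  by_contra hdet
  have hrank := Matrix.rank_of_isUnit (hankelMat A x r (n + 1))
    ((Matrix.isUnit_iff_isUnit_det _).mpr (isUnit_iff_ne_zero.mpr hdet))
  rw [Fintype.card_fin] at hrank
  have hle : (hankelMat A x r (n + 1)).rank ≤ n := by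
    rw [hfac]
    exact (Matrix.rank_mul_le_right _ _).trans
      ((Matrix.rank_le_card_height _).trans (by simp))
  omega
end

section
/- Let G be a strongly connected directed graph on n ≥ 1 vertices with a self-loop at every vertex, and let s be a vertex. Then over any field F with at least n+1 elements, there exists a matrix A consistent with G (A_{ij} = 0 whenever (j,i) is not an edge of G) such that the controllability matrix [e_s | A e_s | … | A^{n-1} e_s] is invertible. -/
/-!
Take a spanning out-tree of `E` rooted at `s` and let `A` carry distinct scalars `μ v` on the
diagonal and a `1` at `(v, parent v)` for every tree edge. Ordered by depth, `A` is triangular,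
so its characteristic polynomial splits; hence if the controllability matrix were singular,
some left eigenvector `ψ` of `A` (eigenvalue `c`) would satisfy `ψ s = 0`.

The eigen-equation reads `μ u * ψ u + ∑ (children w of u), ψ w = c * ψ u`, so following nonzero
entries of `ψ` down the tree ends at a vertex with `μ = c`. A shallowest vertex `u` with
`ψ u ≠ 0` is not `s` and its parent has `ψ = 0`, which forces a sibling of `u` into the support
too; the descents from `u` and from that sibling end at distinct vertices with the same `μ`.
-/

open Matrix Polynomial

theorem Matrix.charpoly_of_eq_or_lt_of_ne_zero {n R α : Type*} [Fintype n] [DecidableEq n]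
    [CommRing R] [LinearOrder α] {M : Matrix n n R} (b : n → α)
    (h : ∀ i j, M i j ≠ 0 → i = j ∨ b i < b j) :
    M.charpoly = ∏ i, (X - C (M i i)) := by
  have hM : M.BlockTriangular b := fun i j hji => by
    by_contra hne
    rcases h i j hne with rfl | hlt
    exacts [lt_irrefl _ hji, lt_asymm hji hlt]
  have hblock a : M.toSquareBlock b a = diagonal fun i : {i // b i = a} => M i i := by
    ext ⟨i, hi⟩ ⟨j, hj⟩
    rcases eq_or_ne i j with rfl | hij
    · simp [toSquareBlock_def]
    · have hMij : M i j = 0 := by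
        by_contra hne
        rcases h i j hne with rfl | hlt
        exacts [hij rfl, (hi ▸ hj ▸ hlt).false]
      simp [toSquareBlock_def, hij, hMij]
  simp_rw [hM.charpoly, hblock, charpoly_diagonal]
  rw [← Finset.prod_fiberwise_of_maps_to (g := b) (t := Finset.univ.image b)
    (fun i _ => Finset.mem_image_of_mem b (Finset.mem_univ i))]
  exact Finset.prod_congr rfl fun a _ =>
    (Finset.prod_subtype _ (fun i => by simp) fun i => X - C (M i i)).symm

theorem Matrix.aeval_transpose {n K : Type*} [Fintype n] [DecidableEq n] [CommRing K]
    (M : Matrix n n K) (p : K[X]) : aeval Mᵀ p = (aeval M p)ᵀ :=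
  MulOpposite.op_injective <| by
    rw [← aeval_op_apply]
    exact aeval_algHom_apply (transposeAlgEquiv n K K).toAlgHom M p

theorem Matrix.exists_eigenvector_aeval_mulVec {ι κ K : Type*} [Fintype ι] [DecidableEq ι]
    [Field K] (M : Matrix ι ι K) (μ : κ → K) (S : Finset κ) {x : ι → K} (hx : x ≠ 0)
    (h : aeval M (∏ i ∈ S, (X - C (μ i))) *ᵥ x = 0) :
    ∃ (p : K[X]) (c : K), aeval M p *ᵥ x ≠ 0 ∧ M *ᵥ (aeval M p *ᵥ x) = c • aeval M p *ᵥ x := by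
  classical
  induction S using Finset.induction_on generalizing x with
  | empty => simp only [Finset.prod_empty, map_one, one_mulVec] at h; exact absurd h hx
  | insert a S ha ih =>
    by_cases hy : aeval M (X - C (μ a)) *ᵥ x = 0
    · refine ⟨1, μ a, by simpa using hx, ?_⟩
      simpa [sub_mulVec, sub_eq_zero, Algebra.algebraMap_eq_smul_one, smul_mulVec] using hy
    · rw [Finset.prod_insert ha, mul_comm, map_mul, ← mulVec_mulVec] at h
      obtain ⟨p, c, hp, hpc⟩ := ih hy h
      refine ⟨p * (X - C (μ a)), c, ?_⟩
      rw [map_mul, ← mulVec_mulVec]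
      exact ⟨hp, hpc⟩

def Matrix.controllabilityMatrix {n : ℕ} {K : Type*} [CommRing K] (M : Matrix (Fin n) (Fin n) K)
    (x : Fin n → K) : Matrix (Fin n) (Fin n) K :=
  of fun a j : Fin n => (M ^ (j : ℕ) *ᵥ x) a

theorem Matrix.exists_forall_dotProduct_aeval_mulVec_eq_zero {n : ℕ} {K : Type*} [Field K]
    {M : Matrix (Fin n) (Fin n) K} {x : Fin n → K} (hM : ¬IsUnit (M.controllabilityMatrix x)) :
    ∃ ψ ≠ 0, ∀ p : K[X], ψ ⬝ᵥ (aeval M p *ᵥ x) = 0 := by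
  rw [isUnit_iff_isUnit_det, isUnit_iff_ne_zero, not_not] at hM
  obtain ⟨ψ, hψ, hψM⟩ := exists_vecMul_eq_zero_iff.mpr hM
  have hpow (j : Fin n) : ψ ⬝ᵥ (M ^ (j : ℕ) *ᵥ x) = 0 := by
    simpa [controllabilityMatrix, vecMul, dotProduct] using congrFun hψM j
  have hn : 0 < n := Nat.pos_of_ne_zero fun hn => hψ (by subst hn; exact Subsingleton.elim _ _)
  have hχ : M.charpoly ≠ 1 := fun h => by
    have := M.charpoly_natDegree_eq_dim
    rw [h, natDegree_one, Fintype.card_fin] at this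
    omega
  refine ⟨ψ, hψ, fun p => ?_⟩
  have hdeg : (p %ₘ M.charpoly).natDegree < n := by
    simpa [M.charpoly_natDegree_eq_dim] using natDegree_modByMonic_lt p M.charpoly_monic hχ
  rw [aeval_eq_aeval_mod_charpoly, aeval_eq_sum_range' hdeg, sum_mulVec, dotProduct_sum]
  refine Finset.sum_eq_zero fun i hi => ?_
  rw [smul_mulVec, dotProduct_smul, hpow ⟨i, Finset.mem_range.mp hi⟩, smul_zero]

theorem Matrix.isUnit_controllabilityMatrix {n : ℕ} {K : Type*} [Field K]
    {M : Matrix (Fin n) (Fin n) K} {x : Fin n → K} (μ : Fin n → K)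
    (hχ : M.charpoly = ∏ i, (X - C (μ i)))
    (h : ∀ (φ : Fin n → K) (c : K), φ ≠ 0 → Mᵀ *ᵥ φ = c • φ → φ ⬝ᵥ x ≠ 0) :
    IsUnit (M.controllabilityMatrix x) := by
  by_contra hM
  obtain ⟨ψ, hψ, hψx⟩ := exists_forall_dotProduct_aeval_mulVec_eq_zero hM
  have hMT : aeval Mᵀ (∏ i, (X - C (μ i))) *ᵥ ψ = 0 := by
    rw [← hχ, ← charpoly_transpose, aeval_self_charpoly, zero_mulVec]
  obtain ⟨p, c, hp, hpc⟩ := Mᵀ.exists_eigenvector_aeval_mulVec μ _ hψ hMT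
  apply h _ c hp hpc
  rw [aeval_transpose, mulVec_transpose, ← dotProduct_mulVec, hψx]

def ReachesIn {V : Type*} (E : V → V → Prop) (s : V) : ℕ → V → Prop
  | 0, v => v = s
  | k + 1, v => ∃ u, ReachesIn E s k u ∧ E u v

theorem exists_reachesIn_of_reflTransGen {V : Type*} {E : V → V → Prop} {s v : V}
    (h : Relation.ReflTransGen E s v) : ∃ k, ReachesIn E s k v := by
  induction h with
  | refl => exact ⟨0, rfl⟩
  | tail _ huv ih =>
    obtain ⟨k, hk⟩ := ih
    exact ⟨k + 1, _, hk, huv⟩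

structure SpanningTree {V : Type*} (E : V → V → Prop) (s : V) where
  parent : V → V
  depth : V → ℕ
  adj_parent : ∀ v ≠ s, E (parent v) v
  depth_parent : ∀ v ≠ s, depth (parent v) + 1 = depth v

namespace SpanningTree

variable {V : Type*} {E : V → V → Prop} {s : V} (T : SpanningTree E s)

theorem nonempty_of_forall_reflTransGen (h : ∀ v, Relation.ReflTransGen E s v) :
    Nonempty (SpanningTree E s) := by
  classical
  have hreach v : ∃ k, ReachesIn E s k v := exists_reachesIn_of_reflTransGen (h v)
  let depth v := Nat.find (hreach v)
  have hdepth v : ReachesIn E s (depth v) v := Nat.find_spec (hreach v)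
  have hparent v (hv : v ≠ s) : ∃ u, E u v ∧ depth u + 1 = depth v := by
    obtain ⟨k, hk⟩ : ∃ k, depth v = k + 1 := by
      refine Nat.exists_eq_add_one.mpr (Nat.pos_of_ne_zero fun h0 => hv ?_)
      have h := hdepth v
      rwa [h0] at h
    obtain ⟨u, hu, huv⟩ : ∃ u, ReachesIn E s k u ∧ E u v := by
      have h := hdepth v
      rwa [hk] at h
    have hle : depth u ≤ k := Nat.find_min' _ hu
    have hge : depth v ≤ depth u + 1 := Nat.find_min' _ ⟨u, hdepth u, huv⟩
    exact ⟨u, huv, by omega⟩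
  choose! parent hparent using hparent
  exact ⟨⟨parent, depth, fun v hv => (hparent v hv).1, fun v hv => (hparent v hv).2⟩⟩

theorem parent_ne {v : V} (hv : v ≠ s) : T.parent v ≠ v := by
  have := T.depth_parent v hv
  intro h
  rw [h] at this
  omega

variable {F : Type*} [Field F] [DecidableEq V]

def matrix (μ : V → F) : Matrix V V F :=
  diagonal μ + of fun u v => if u ≠ s ∧ T.parent u = v then 1 else 0

theorem eq_or_parent_eq_of_matrix_ne_zero {μ : V → F} {u v : V} (h : T.matrix μ u v ≠ 0) :
    u = v ∨ u ≠ s ∧ T.parent u = v := by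
  by_contra! h'
  apply h
  by_cases hu : u = s <;> simp_all [matrix, diagonal_apply_ne]

theorem matrix_apply_self (μ : V → F) (v : V) : T.matrix μ v v = μ v := by
  by_cases hv : v = s <;> simp [matrix, hv, T.parent_ne]

variable [Fintype V]

def children (u : V) : Finset V := {c | c ≠ s ∧ T.parent c = u}

theorem transpose_matrix_mulVec_apply (μ ψ : V → F) (u : V) :
    ((T.matrix μ)ᵀ *ᵥ ψ) u = μ u * ψ u + ∑ c ∈ T.children u, ψ c := by
  rw [matrix, transpose_add, add_mulVec, Pi.add_apply, diagonal_transpose, mulVec_diagonal]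
  simp [mulVec, dotProduct, children, Finset.sum_filter]

theorem charpoly_matrix (μ : V → F) : (T.matrix μ).charpoly = ∏ v, (X - C (μ v)) := by
  simp_rw [← T.matrix_apply_self μ]
  refine charpoly_of_eq_or_lt_of_ne_zero (OrderDual.toDual ∘ T.depth) fun u v huv => ?_
  rcases T.eq_or_parent_eq_of_matrix_ne_zero huv with rfl | ⟨hu, rfl⟩
  · exact .inl rfl
  · have := T.depth_parent u hu
    exact .inr (show T.depth (T.parent u) < T.depth u by omega)

theorem exists_descendant_eq_of_eigenvector {μ ψ : V → F} {c : F}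
    (hψ : (T.matrix μ)ᵀ *ᵥ ψ = c • ψ) {x : V} (hx : ψ x ≠ 0) :
    ∃ w k, T.parent^[k] w = x ∧ T.depth w = T.depth x + k ∧ μ w = c := by
  classical
  let D : Finset V := {w | ψ w ≠ 0 ∧ ∃ k, T.parent^[k] w = x ∧ T.depth w = T.depth x + k}
  obtain ⟨w, hwD, hwmax⟩ := D.exists_max_image T.depth ⟨x, by simp [D, hx]⟩
  simp only [D, Finset.mem_filter, Finset.mem_univ, true_and] at hwD hwmax
  obtain ⟨hw, k, hk, hdw⟩ := hwD
  have hchildren : ∀ d ∈ T.children w, ψ d = 0 := by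
    intro d hd
    simp only [children, Finset.mem_filter, Finset.mem_univ, true_and] at hd
    by_contra hψd
    have hdd := T.depth_parent d hd.1
    rw [hd.2] at hdd
    have := hwmax d ⟨hψd, k + 1, by rw [Function.iterate_succ_apply, hd.2, hk], by omega⟩
    omega
  have heq := congrFun hψ w
  rw [transpose_matrix_mulVec_apply, Finset.sum_eq_zero hchildren, add_zero] at heq
  exact ⟨w, k, hk, hdw, mul_right_cancel₀ hw heq⟩

theorem apply_root_ne_zero_of_eigenvector {μ ψ : V → F} {c : F} (hμ : Function.Injective μ)
    (hψ : (T.matrix μ)ᵀ *ᵥ ψ = c • ψ) (hψ0 : ψ ≠ 0) : ψ s ≠ 0 := by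
  classical
  intro hs
  obtain ⟨u, hu, humin⟩ := Finset.exists_min_image {v | ψ v ≠ 0} T.depth
    (by obtain ⟨v, hv⟩ := Function.ne_iff.mp hψ0; exact ⟨v, by simpa using hv⟩)
  simp only [Finset.mem_filter, Finset.mem_univ, true_and] at hu humin
  have hus : u ≠ s := fun h => hu (h ▸ hs)
  set p := T.parent u
  have hpu : T.depth p + 1 = T.depth u := T.depth_parent u hus
  have hp : ψ p = 0 := by
    by_contra hp
    have := humin p hp
    omega
  have hu_child : u ∈ T.children p := by simp [children, hus, p]
  obtain ⟨u', hu', hψu'⟩ : ∃ u' ∈ (T.children p).erase u, ψ u' ≠ 0 := by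
    have heq := congrFun hψ p
    rw [transpose_matrix_mulVec_apply, hp, ← Finset.add_sum_erase _ _ hu_child] at heq
    apply Finset.exists_ne_zero_of_sum_ne_zero
    simp only [Pi.smul_apply, smul_eq_mul, hp, mul_zero, zero_add] at heq
    intro h
    rw [h, add_zero] at heq
    exact hu heq
  obtain ⟨hne, hu'_child⟩ := Finset.mem_erase.mp hu'
  simp only [children, Finset.mem_filter, Finset.mem_univ, true_and] at hu'_child
  obtain ⟨w, k, hk, hdw, hw⟩ := T.exists_descendant_eq_of_eigenvector hψ hu
  obtain ⟨w', k', hk', hdw', hw'⟩ := T.exists_descendant_eq_of_eigenvector hψ hψu'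
  obtain rfl : w = w' := hμ (hw.trans hw'.symm)
  have hpu' := T.depth_parent u' hu'_child.1
  rw [hu'_child.2] at hpu'
  obtain rfl : k = k' := by omega
  exact hne (hk'.symm.trans hk)

end SpanningTree

theorem exists_consistent_ctrlMat_isUnit_general {n : ℕ} {F : Type*} [Field F]
    (hcard : Nonempty (Fin (n + 1) ↪ F))
    (E : Fin n → Fin n → Prop)
    (hconn : ∀ u v : Fin n, Relation.ReflTransGen E u v)
    (hloop : ∀ v : Fin n, E v v)
    (s : Fin n) :
    ∃ A : Matrix (Fin n) (Fin n) F,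
      (∀ u v : Fin n, A u v ≠ 0 → E v u) ∧
      IsUnit (Matrix.of fun a b : Fin n =>
        ((A ^ (b : ℕ)) *ᵥ Pi.single s (1 : F)) a) := by
  obtain ⟨T⟩ := SpanningTree.nonempty_of_forall_reflTransGen (hconn s)
  obtain ⟨emb⟩ := hcard
  let μ := Fin.castSuccEmb.trans emb
  refine ⟨T.matrix μ, fun u v huv => ?_, ?_⟩
  · rcases T.eq_or_parent_eq_of_matrix_ne_zero huv with rfl | ⟨hu, rfl⟩
    exacts [hloop u, T.adj_parent u hu]
  · refine isUnit_controllabilityMatrix μ (T.charpoly_matrix μ) fun φ c hφ hφc => ?_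
    rw [dotProduct_single, mul_one]
    exact T.apply_root_ne_zero_of_eigenvector μ.injective hφc hφ

/-- For a strongly connected directed graph `E` (with `E v u` meaning there is an edge
from `v` to `u`) with a self-loop at every vertex, over any field with at least `n + 1`
elements, there exists a matrix `A` consistent with the graph such that the
controllability matrix `[e_s | A e_s | … | A^(n-1) e_s]` is invertible. -/
theorem exists_consistent_ctrlMat_isUnit {n : ℕ} {F : Type*} [Field F]
    [DecidableEq F]
    (hcard : Nonempty (Fin (n + 1) ↪ F))
    (E : Fin n → Fin n → Prop)
    (hconn : ∀ u v : Fin n, Relation.ReflTransGen E u v)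
    (hloop : ∀ v : Fin n, E v v)
    (s : Fin n) :
    ∃ A : Matrix (Fin n) (Fin n) F,
      (∀ u v : Fin n, A u v ≠ 0 → E v u) ∧
      IsUnit (Matrix.of fun a b : Fin n =>
        ((A ^ (b : ℕ)) *ᵥ Pi.single s (1 : F)) a) :=
  exists_consistent_ctrlMat_isUnit_general hcard E hconn hloop s
end

section
/- Let G be a directed graph on n vertices containing a directed spanning tree rooted at vertex s (a subgraph with a directed path from s to every vertex) and self-loops at every vertex. Define A over a field F by: A_{i,j} = 1 if (j,i) is a tree edge, A_{i,i} for i = 1,…,n pairwise distinct and nonzero, A_{i,j} = 0 otherwise. Then the matrix [e_s | A e_s | … | A^{n-1} e_s] is invertible. -/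
open Matrix Polynomial

namespace SpanningTreeCtrl

variable {n : ℕ} {F : Type*} [Field F]

section

variable (s : Fin n) (parent : Fin n → Fin n)
  (hreach : ∀ v : Fin n, ∃ k : ℕ, parent^[k] v = s)

/-- depth of a vertex: distance to the root along `parent`. -/
noncomputable def dep (v : Fin n) : ℕ := Nat.find (hreach v)

lemma dep_spec (v : Fin n) : parent^[dep s parent hreach v] v = s :=
  Nat.find_spec (hreach v)

lemma dep_eq_zero_iff (v : Fin n) : dep s parent hreach v = 0 ↔ v = s := by
  rw [dep, Nat.find_eq_zero]
  simp

lemma dep_parent (v : Fin n) (hv : v ≠ s) :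
    dep s parent hreach v = dep s parent hreach (parent v) + 1 := by
  have h0 : dep s parent hreach v ≠ 0 := by
    intro h; exact hv ((dep_eq_zero_iff s parent hreach v).mp h)
  obtain ⟨m, hm⟩ := Nat.exists_eq_succ_of_ne_zero h0
  have hsp : parent^[m] (parent v) = s := by
    have h := dep_spec s parent hreach v
    rw [hm, Function.iterate_succ_apply] at h
    exact h
  have h1 : dep s parent hreach (parent v) ≤ m := Nat.find_le hsp
  have h2 : dep s parent hreach v ≤ dep s parent hreach (parent v) + 1 := by
    refine Nat.find_le ?_
    rw [Function.iterate_succ_apply]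
    exact dep_spec s parent hreach (parent v)
  omega

include hreach in
lemma parent_ne (v : Fin n) (hv : v ≠ s) : parent v ≠ v := by
  intro h
  have h1 := dep_parent s parent hreach v hv
  rw [h] at h1
  omega

variable (d : Fin n → F) (A : Matrix (Fin n) (Fin n) F)
  (hA : ∀ i j : Fin n,
      A i j = if i = j then d i else if i ≠ s ∧ j = parent i then 1 else 0)

include hreach hA in
lemma mulVec_formula (x : Fin n → F) (v : Fin n) :
    (A *ᵥ x) v = d v * x v + (if v = s then 0 else x (parent v)) := by
  classical
  by_cases hv : v = s
  · subst hv
    have h : ∀ j, A v j * x j = if j = v then d v * x v else 0 := by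
      intro j
      rw [hA]
      by_cases h1 : j = v
      · rw [if_pos h1.symm, if_pos h1, h1]
      · rw [if_neg (fun hh => h1 hh.symm), if_neg h1]
        rw [if_neg (fun hh => hh.1 rfl), zero_mul]
    simp [Matrix.mulVec, dotProduct, h]
  · have hpv : parent v ≠ v := parent_ne s parent hreach v hv
    have h : ∀ j, A v j * x j =
        (if j = v then d v * x v else 0) + (if j = parent v then x (parent v) else 0) := by
      intro j
      rw [hA]
      by_cases h1 : j = v
      · rw [if_pos h1.symm, if_pos h1,
          if_neg (by rw [h1]; exact fun hh => hpv hh.symm), add_zero, h1]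
      · rw [if_neg (fun hh => h1 hh.symm), if_neg h1]
        by_cases h2 : j = parent v
        · rw [if_pos ⟨hv, h2⟩, if_pos h2, one_mul, h2, zero_add]
        · rw [if_neg (fun hh => h2 hh.2), if_neg h2, zero_mul, add_zero]
    simp only [Matrix.mulVec, dotProduct, h, Finset.sum_add_distrib,
      Finset.sum_ite_eq', Finset.mem_univ, if_true, if_neg hv]

/-- `p ↦ (aeval A p) *ᵥ e_s` as a linear map. -/
noncomputable def ctrl : F[X] →ₗ[F] (Fin n → F) where
  toFun p := (aeval A p) *ᵥ Pi.single s 1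
  map_add' p q := by
    show (aeval A (p + q)) *ᵥ _ = _
    rw [_root_.map_add, Matrix.add_mulVec]
  map_smul' a p := by
    show (aeval A (a • p)) *ᵥ _ = _
    rw [_root_.map_smul, Matrix.smul_mulVec]
    rfl

lemma ctrl_pow (k : ℕ) : ctrl s A (X ^ k) = (A ^ k) *ᵥ Pi.single s 1 := by
  simp [ctrl]

lemma ctrl_one_s : ctrl s A 1 s = 1 := by
  simp [ctrl]

include hreach hA in
lemma ctrl_X_mul (p : F[X]) (v : Fin n) :
    ctrl s A (X * p) v = d v * ctrl s A p v +
      (if v = s then 0 else ctrl s A p (parent v)) := by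
  have h : aeval A (X * p) = A * aeval A p := by rw [_root_.map_mul, aeval_X]
  show ((aeval A (X * p)) *ᵥ Pi.single s 1) v = _
  rw [h, ← Matrix.mulVec_mulVec]
  exact mulVec_formula s parent hreach d A hA _ v

include hreach hA in
lemma ctrl_linfac (c : F) (p : F[X]) (v : Fin n) :
    ctrl s A ((X - C c) * p) v = (d v - c) * ctrl s A p v +
      (if v = s then 0 else ctrl s A p (parent v)) := by
  have h1 : (X - C c) * p = X * p - c • p := by
    rw [sub_mul, Polynomial.smul_eq_C_mul]
  rw [h1, map_sub, LinearMap.map_smul]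
  have h2 := ctrl_X_mul s parent hreach d A hA p v
  simp only [Pi.sub_apply, Pi.smul_apply, smul_eq_mul, h2]
  ring

include hA in
lemma pow_mulVec_zero : ∀ (k : ℕ) (v : Fin n), k < dep s parent hreach v →
    ((A ^ k) *ᵥ Pi.single s 1) v = 0 := by
  intro k
  induction k with
  | zero =>
    intro v hv
    have hvs : v ≠ s := by
      intro h; rw [(dep_eq_zero_iff s parent hreach v).mpr h] at hv; omega
    rw [pow_zero, Matrix.one_mulVec]
    exact Pi.single_eq_of_ne hvs _
  | succ k ih =>
    intro v hv
    have hvs : v ≠ s := by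
      intro h; rw [(dep_eq_zero_iff s parent hreach v).mpr h] at hv; omega
    have hdp := dep_parent s parent hreach v hvs
    rw [pow_succ', ← Matrix.mulVec_mulVec, mulVec_formula s parent hreach d A hA]
    rw [ih v (by omega), ih (parent v) (by omega), if_neg hvs]
    ring

include hA in
lemma ctrl_zero_of_natDegree_lt (p : F[X]) (v : Fin n)
    (h : p.natDegree < dep s parent hreach v) : ctrl s A p v = 0 := by
  conv_lhs => rw [p.as_sum_range' (p.natDegree + 1) (Nat.lt_succ_self _)]
  rw [map_sum, Finset.sum_apply]
  refine Finset.sum_eq_zero fun i hi => ?_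
  rw [← Polynomial.smul_X_eq_monomial, LinearMap.map_smul]
  simp only [Pi.smul_apply, ctrl_pow, smul_eq_mul]
  rw [pow_mulVec_zero s parent hreach d A hA i v
    (lt_of_lt_of_le (Finset.mem_range.mp hi) h), mul_zero]

/-- product of `(X - C (d u))` over the strict ancestors `u` of `v`. -/
noncomputable def Q (v : Fin n) : F[X] :=
  ∏ j ∈ Finset.range (dep s parent hreach v), (X - C (d (parent^[j + 1] v)))

lemma Q_s : Q s parent hreach d s = 1 := by
  rw [Q, (dep_eq_zero_iff s parent hreach s).mpr rfl]
  simp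

lemma Q_parent (v : Fin n) (hv : v ≠ s) :
    Q s parent hreach d v = (X - C (d (parent v))) * Q s parent hreach d (parent v) := by
  rw [Q, dep_parent s parent hreach v hv, Finset.prod_range_succ']
  rw [show parent^[0 + 1] v = parent v by simp]
  rw [mul_comm]
  congr 1

lemma Q_natDegree (v : Fin n) :
    (Q s parent hreach d v).natDegree = dep s parent hreach v := by
  rw [Q, Polynomial.natDegree_prod]
  · simp
  · intro i _
    exact Polynomial.X_sub_C_ne_zero _

include hA in
lemma ctrl_Q_chain_zero : ∀ (N : ℕ) (v : Fin n), dep s parent hreach v ≤ N → ∀ w : F[X],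
    ctrl s A ((X - C (d v)) * (Q s parent hreach d v * w)) v = 0 := by
  intro N
  induction N with
  | zero =>
    intro v hv w
    have hvs : v = s := (dep_eq_zero_iff s parent hreach v).mp (Nat.le_zero.mp hv)
    rw [ctrl_linfac s parent hreach d A hA, sub_self, zero_mul, if_pos hvs, zero_add]
  | succ N ih =>
    intro v hv w
    rw [ctrl_linfac s parent hreach d A hA, sub_self, zero_mul, zero_add]
    by_cases hvs : v = s
    · rw [if_pos hvs]
    · rw [if_neg hvs, Q_parent s parent hreach d v hvs, mul_assoc]
      exact ih (parent v) (by have := dep_parent s parent hreach v hvs; omega) _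

include hreach hA in
lemma ctrl_eval_root (w : F[X]) : ctrl s A w s = eval (d s) w := by
  induction w using Polynomial.induction_on with
  | C a =>
    rw [show (C a : F[X]) = a • 1 by rw [Polynomial.smul_eq_C_mul, mul_one],
      LinearMap.map_smul]
    simp [ctrl_one_s s A]
  | add p q hp hq =>
    rw [map_add]
    simp only [Pi.add_apply, hp, hq, eval_add]
  | monomial k a hk =>
    rw [show (C a : F[X]) * X ^ (k + 1) = X * (C a * X ^ k) by ring,
      ctrl_X_mul s parent hreach d A hA, if_pos rfl, add_zero, hk]
    simp only [eval_mul, eval_pow, eval_X, eval_C]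
    try ring

include hA in
lemma ctrl_Q_mul : ∀ (N : ℕ) (v : Fin n), dep s parent hreach v ≤ N → ∀ w : F[X],
    ctrl s A (Q s parent hreach d v * w) v = eval (d v) w := by
  intro N
  induction N with
  | zero =>
    intro v hv w
    rw [(dep_eq_zero_iff s parent hreach v).mp (Nat.le_zero.mp hv)]
    rw [Q_s s parent hreach d, one_mul]
    exact ctrl_eval_root s parent hreach d A hA w
  | succ N ih =>
    intro v hv w
    by_cases hvs : v = s
    · rw [hvs, Q_s s parent hreach d, one_mul]
      exact ctrl_eval_root s parent hreach d A hA w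
    · have hdp := dep_parent s parent hreach v hvs
      have hQ1 : ctrl s A (Q s parent hreach d v) v = 1 := by
        rw [Q_parent s parent hreach d v hvs,
          ctrl_linfac s parent hreach d A hA, if_neg hvs]
        rw [ctrl_zero_of_natDegree_lt s parent hreach d A hA _ v
          (by rw [Q_natDegree]; omega), mul_zero, zero_add]
        have h1 := ih (parent v) (by omega) 1
        rwa [mul_one, eval_one] at h1
      induction w using Polynomial.induction_on with
      | C a =>
        rw [show Q s parent hreach d v * C a = a • Q s parent hreach d v by
          rw [Polynomial.smul_eq_C_mul, mul_comm], LinearMap.map_smul]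
        simp [hQ1]
      | add p q hp hq =>
        rw [mul_add, map_add]
        simp only [Pi.add_apply, hp, hq, eval_add]
      | monomial k a hk =>
        rw [show Q s parent hreach d v * (C a * X ^ (k + 1))
            = X * (Q s parent hreach d v * (C a * X ^ k)) by ring,
          ctrl_X_mul s parent hreach d A hA, if_neg hvs, hk]
        rw [show Q s parent hreach d v * (C a * X ^ k) = (X - C (d (parent v)))
            * (Q s parent hreach d (parent v) * (C a * X ^ k)) by
          rw [Q_parent s parent hreach d v hvs]; ring]
        rw [ctrl_Q_chain_zero s parent hreach d A hA
          (dep s parent hreach (parent v)) (parent v) le_rfl]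
        simp only [eval_mul, eval_pow, eval_X, eval_C, add_zero]
        try ring

end

end SpanningTreeCtrl

open SpanningTreeCtrl

set_option linter.unusedVariables false in
/-- Let `parent` describe a directed spanning tree rooted at `s` (every vertex reaches `s`
by iterating `parent`, and the tree edges are `(parent i, i)` for `i ≠ s`).  Define `A` by:
`A i j = 1` if `(j, i)` is a tree edge, the diagonal entries `A i i = d i` are pairwise
distinct and nonzero, and all other entries are `0`.  Then the controllability matrix
`[e_s | A e_s | … | A^(n-1) e_s]` is invertible. -/
theorem spanning_tree_ctrlMat_isUnit {n : ℕ} {F : Type*} [Field F] [DecidableEq F]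
    (s : Fin n) (parent : Fin n → Fin n)
    (hreach : ∀ v : Fin n, ∃ k : ℕ, parent^[k] v = s)
    (d : Fin n → F)
    (hd : Function.Injective d) (hd0 : ∀ i, d i ≠ 0)
    (A : Matrix (Fin n) (Fin n) F)
    (hA : ∀ i j : Fin n,
      A i j = if i = j then d i else if i ≠ s ∧ j = parent i then 1 else 0) :
    IsUnit (Matrix.of fun a b : Fin n =>
      ((A ^ (b : ℕ)) *ᵥ Pi.single s (1 : F)) a) := by
  classical
  set M : Matrix (Fin n) (Fin n) F :=
    Matrix.of fun a b : Fin n => ((A ^ (b : ℕ)) *ᵥ Pi.single s (1 : F)) a with hM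
  rw [Matrix.isUnit_iff_isUnit_det, isUnit_iff_ne_zero]
  intro hdet
  obtain ⟨x, hx0, hx⟩ := Matrix.exists_mulVec_eq_zero_iff.mpr hdet
  set p : Polynomial F := ∑ b : Fin n, C (x b) * X ^ (b : ℕ) with hp
  have hctrl : ∀ v, ctrl s A p v = 0 := by
    intro v
    have h1 : ctrl s A p v = (M *ᵥ x) v := by
      rw [hp, map_sum, Finset.sum_apply, Matrix.mulVec, dotProduct]
      refine Finset.sum_congr rfl fun b _ => ?_
      rw [show C (x b) * X ^ (b : ℕ) = x b • (X ^ (b : ℕ) : Polynomial F) by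
        rw [Polynomial.smul_eq_C_mul], LinearMap.map_smul]
      simp only [Pi.smul_apply, smul_eq_mul, ctrl_pow s A, hM, Matrix.of_apply]
      ring
    rw [h1, hx, Pi.zero_apply]
  have heval : ∀ (N : ℕ) (v : Fin n), dep s parent hreach v ≤ N →
      ∃ w : Polynomial F, p = Q s parent hreach d v * w ∧ eval (d v) w = 0 := by
    intro N
    induction N with
    | zero =>
      intro v hv
      rw [(dep_eq_zero_iff s parent hreach v).mp (Nat.le_zero.mp hv)]
      exact ⟨p, by rw [Q_s s parent hreach d, one_mul],
        by rw [← ctrl_eval_root s parent hreach d A hA]; exact hctrl s⟩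
    | succ N ih =>
      intro v hv
      by_cases hvs : v = s
      · rw [hvs]
        exact ⟨p, by rw [Q_s s parent hreach d, one_mul],
          by rw [← ctrl_eval_root s parent hreach d A hA]; exact hctrl s⟩
      · have hdp := dep_parent s parent hreach v hvs
        obtain ⟨w', hw', hev⟩ := ih (parent v) (by omega)
        obtain ⟨w, hw⟩ := Polynomial.dvd_iff_isRoot.mpr hev
        have h2 : p = Q s parent hreach d v * w := by
          rw [hw', hw, Q_parent s parent hreach d v hvs]; ring
        refine ⟨w, h2, ?_⟩
        rw [← ctrl_Q_mul s parent hreach d A hA (dep s parent hreach v) v le_rfl w, ← h2]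
        exact hctrl v
  have hroot : ∀ v, eval (d v) p = 0 := by
    intro v
    obtain ⟨w, hw, hev⟩ := heval _ v le_rfl
    rw [hw, eval_mul, hev, mul_zero]
  have hdeg : p.natDegree < n := by
    have hn : 0 < n := s.pos
    refine lt_of_le_of_lt (Polynomial.natDegree_sum_le_of_forall_le _ _ fun b _ => ?_)
      (show n - 1 < n by omega)
    refine le_trans (Polynomial.natDegree_C_mul_le _ _) ?_
    rw [Polynomial.natDegree_X_pow]
    omega
  have hp0 : p = 0 :=
    Polynomial.eq_zero_of_natDegree_lt_card_of_eval_eq_zero p hd hroot (by simpa using hdeg)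
  apply hx0
  funext b
  have hcoeff : x b = p.coeff (b : ℕ) := by
    rw [hp, Polynomial.finset_sum_coeff]
    rw [Finset.sum_congr rfl fun c _ => by
      rw [Polynomial.coeff_C_mul, Polynomial.coeff_X_pow]]
    simp [Fin.val_inj]
  rw [Pi.zero_apply, hcoeff, hp0, Polynomial.coeff_zero]
end

section
/- (Schwartz–Zippel) Let p be a nonzero polynomial in ℓ variables over a finite field F_q with total degree at most d, where d ≤ q. If z_1, …, z_ℓ are chosen independently and uniformly at random from F_q, then the probability that p(z_1,…,z_ℓ) = 0 is at most d/q. -/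
open MvPolynomial Finset

lemma sz_aux {F : Type*} [Field F] [Fintype F] [DecidableEq F] :
    ∀ (ℓ : ℕ) (p : MvPolynomial (Fin ℓ) F), p ≠ 0 →
    (Finset.univ.filter fun z : Fin ℓ → F => MvPolynomial.eval z p = 0).card * Fintype.card F
      ≤ p.totalDegree * (Fintype.card F) ^ ℓ := by
  intro ℓ
  induction ℓ with
  | zero =>
    intro p hp
    obtain ⟨a, rfl⟩ := MvPolynomial.C_surjective (Fin 0) p
    have ha : a ≠ 0 := fun h => hp (by rw [h, map_zero])
    have : (Finset.univ.filter fun z : Fin 0 → F => MvPolynomial.eval z (C a) = 0) = ∅ := by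
      rw [Finset.filter_eq_empty_iff]
      intro z _
      simpa using ha
    rw [this, Finset.card_empty, Nat.zero_mul]
    exact Nat.zero_le _
  | succ n ih =>
    intro p hp
    classical
    have hq'0 : MvPolynomial.finSuccEquiv F n p ≠ 0 :=
      (map_ne_zero_iff _ (MvPolynomial.finSuccEquiv F n).injective).mpr hp
    set k := (MvPolynomial.finSuccEquiv F n p).natDegree with hk
    have hc0 : (MvPolynomial.finSuccEquiv F n p).coeff k ≠ 0 :=
      Polynomial.leadingCoeff_ne_zero.mpr hq'0
    set c := (MvPolynomial.finSuccEquiv F n p).coeff k with hc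
    have hck : c.totalDegree + k ≤ p.totalDegree :=
      MvPolynomial.totalDegree_coeff_finSuccEquiv_add_le p k hc0
    -- fiberwise count
    have hcard : (Finset.univ.filter fun z : Fin (n+1) → F => MvPolynomial.eval z p = 0).card
        = ∑ x : Fin n → F,
          (Finset.univ.filter fun a : F => MvPolynomial.eval (Fin.cons a x) p = 0).card := by
      rw [Finset.card_eq_sum_card_fiberwise
        (f := fun z : Fin (n+1) → F => Fin.tail z) (t := Finset.univ) (by intros; simp)]
      refine Finset.sum_congr rfl fun x _ => ?_
      refine Finset.card_bij (fun z _ => z 0) ?_ ?_ ?_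
      · intro z hz
        simp only [Finset.mem_filter, Finset.mem_univ, true_and] at hz ⊢
        rw [show Fin.cons (z 0) x = z by
          rw [← hz.2]; exact Fin.cons_self_tail z]
        exact hz.1
      · intro z1 h1 z2 h2 h
        simp only [Finset.mem_filter, Finset.mem_univ, true_and] at h1 h2
        have h12 : Fin.tail z1 = Fin.tail z2 := h1.2.trans h2.2.symm
        funext i
        cases i using Fin.cases with
        | zero => exact h
        | succ j => exact congrFun h12 j
      · intro a ha
        refine ⟨Fin.cons a x, ?_, rfl⟩
        simp only [Finset.mem_filter, Finset.mem_univ, true_and] at ha ⊢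
        exact ⟨ha, rfl⟩
    -- pointwise bound
    have hpt : ∀ x : Fin n → F,
        (Finset.univ.filter fun a : F => MvPolynomial.eval (Fin.cons a x) p = 0).card
        ≤ if MvPolynomial.eval x c = 0 then Fintype.card F else k := by
      intro x
      by_cases hx : MvPolynomial.eval x c = 0
      · simp only [hx, if_true]
        exact Finset.card_le_univ _
      · simp only [hx, if_false]
        set P : Polynomial F := (MvPolynomial.finSuccEquiv F n p).map (MvPolynomial.eval x)
          with hP
        have hPlead : P.coeff k = MvPolynomial.eval x c := by
          rw [hP, Polynomial.coeff_map, hc]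
        have hP0 : P ≠ 0 := fun h => hx (by rw [← hPlead, h, Polynomial.coeff_zero])
        have hPdeg : P.natDegree ≤ k := Polynomial.natDegree_map_le
        have heval : ∀ a : F, MvPolynomial.eval (Fin.cons a x) p = P.eval a := fun a =>
          MvPolynomial.eval_eq_eval_mv_eval' x a p
        calc (Finset.univ.filter fun a : F => MvPolynomial.eval (Fin.cons a x) p = 0).card
            ≤ P.roots.toFinset.card := by
              apply Finset.card_le_card
              intro a ha
              simp only [Finset.mem_filter, Finset.mem_univ, true_and] at ha
              rw [Multiset.mem_toFinset, Polynomial.mem_roots hP0]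
              rw [Polynomial.IsRoot, ← heval a, ha]
          _ ≤ P.roots.card := P.roots.toFinset_card_le
          _ ≤ P.natDegree := P.card_roots'
          _ ≤ k := hPdeg
    -- combine
    have hsum : (Finset.univ.filter fun z : Fin (n+1) → F => MvPolynomial.eval z p = 0).card
        ≤ (Finset.univ.filter fun x : Fin n → F => MvPolynomial.eval x c = 0).card
            * Fintype.card F + (Fintype.card F) ^ n * k := by
      rw [hcard]
      calc ∑ x : Fin n → F,
            (Finset.univ.filter fun a : F => MvPolynomial.eval (Fin.cons a x) p = 0).card
          ≤ ∑ x : Fin n → F, (if MvPolynomial.eval x c = 0 then Fintype.card F else k) :=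
            Finset.sum_le_sum fun x _ => hpt x
        _ = (Finset.univ.filter fun x : Fin n → F => MvPolynomial.eval x c = 0).card
              * Fintype.card F
            + (Finset.univ.filter fun x : Fin n → F => ¬ MvPolynomial.eval x c = 0).card * k := by
            rw [Finset.sum_ite, Finset.sum_const, Finset.sum_const, smul_eq_mul, smul_eq_mul]
        _ ≤ _ := by
            refine Nat.add_le_add_left ?_ _
            calc (Finset.univ.filter fun x : Fin n → F => ¬ MvPolynomial.eval x c = 0).card * k
                ≤ (Fintype.card (Fin n → F)) * k :=
                  Nat.mul_le_mul_right k (Finset.card_le_univ _)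
              _ = (Fintype.card F) ^ n * k := by rw [Fintype.card_fun, Fintype.card_fin]
    have ihc := ih c hc0
    calc (Finset.univ.filter fun z : Fin (n+1) → F => MvPolynomial.eval z p = 0).card
          * Fintype.card F
        ≤ ((Finset.univ.filter fun x : Fin n → F => MvPolynomial.eval x c = 0).card
            * Fintype.card F + (Fintype.card F) ^ n * k) * Fintype.card F :=
          Nat.mul_le_mul_right _ hsum
      _ = ((Finset.univ.filter fun x : Fin n → F => MvPolynomial.eval x c = 0).card
            * Fintype.card F) * Fintype.card F + k * (Fintype.card F) ^ (n+1) := by ring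
      _ ≤ (c.totalDegree * (Fintype.card F) ^ n) * Fintype.card F
            + k * (Fintype.card F) ^ (n+1) := Nat.add_le_add_right
              (Nat.mul_le_mul_right _ ihc) _
      _ = (c.totalDegree + k) * (Fintype.card F) ^ (n+1) := by ring
      _ ≤ p.totalDegree * (Fintype.card F) ^ (n+1) := Nat.mul_le_mul_right _ hck

/-- **Schwartz–Zippel lemma.**  If `p` is a nonzero polynomial in `ℓ` variables over a
finite field `F` with `q` elements, of total degree at most `d ≤ q`, and the inputs are
chosen independently and uniformly at random, then the probability that `p` evaluates to
zero is at most `d / q`. -/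
theorem schwartz_zippel {ℓ d : ℕ} {F : Type*} [Field F] [Fintype F] [DecidableEq F]
    (p : MvPolynomial (Fin ℓ) F) (hp : p ≠ 0)
    (hdeg : p.totalDegree ≤ d) (hdq : d ≤ Fintype.card F) :
    ((Finset.univ.filter fun z : Fin ℓ → F => MvPolynomial.eval z p = 0).card : ℝ)
        / (Fintype.card (Fin ℓ → F)) ≤ (d : ℝ) / (Fintype.card F) := by
  have hq : 0 < Fintype.card F := Fintype.card_pos
  have h := (sz_aux ℓ p hp).trans (Nat.mul_le_mul_right _ hdeg)
  have hcast : ((Finset.univ.filter fun z : Fin ℓ → F => MvPolynomial.eval z p = 0).card : ℝ)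
      * Fintype.card F ≤ (d : ℝ) * (Fintype.card F : ℝ) ^ ℓ := by
    exact_mod_cast h
  rw [Fintype.card_fun, Fintype.card_fin]
  rw [div_le_div_iff₀ (by positivity) (by positivity)]
  calc ((Finset.univ.filter fun z : Fin ℓ → F => MvPolynomial.eval z p = 0).card : ℝ)
        * Fintype.card F ≤ (d : ℝ) * (Fintype.card F : ℝ) ^ ℓ := hcast
    _ = (d : ℝ) * ((Fintype.card F ^ ℓ : ℕ) : ℝ) := by push_cast; ring
end

section
/- Let G be a strongly connected directed graph on n vertices with self-loops, with m edges. View the m nonzero entries of A and the n entries of x as free variables. Then det H_n^{(r)}, the determinant of the n×n Hankel matrix with (a,b)-entry (A^{a+b-2} x)_r, is a nonzero polynomial in F[λ_1,…,λ_m,ξ_1,…,ξ_n] of total degree at most n², for any field F with at least n+1 elements. -/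
/-!
Specializing the variables into a field can only make the determinant vanish, so it suffices to
exhibit one matrix `B` supported on the edges and one vector `y` with nonsingular Hankel matrix.
Take a spanning in-tree of `E` rooted at `r` and let `B` carry pairwise distinct values `T i` on
the diagonal (the self-loops) and `1` on the tree edges. On the path from `i` to `r` the matrix
`B` acts bidiagonally, which yields an eigenvector `p i` for `T i` supported on that path with
`p i r ≠ 0`. For `y = ∑ i, p i` the Hankel matrix is `Vᵀ * diagonal (p · r) * V`, where `V` is
the Vandermonde matrix of `T`. The values `T i` are the variables of the rational function field
`F(t₁, …, tₙ)`. The degree bound holds because the `(a, b)` entry has degree at most `a + b + 1`.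
-/

open Matrix Finset

section Hankel

variable {ι R : Type*} [Fintype ι] [DecidableEq ι] [CommRing R]

/-- Indices start at `0`, so the `(a, b)` entry is the paper's `(A ^ (a + b - 2) x)_r`. -/
def hankelMatrix (A : Matrix ι ι R) (x : ι → R) (r : ι) (m : ℕ) : Matrix (Fin m) (Fin m) R :=
  Matrix.of fun a b => (A ^ ((a : ℕ) + (b : ℕ)) *ᵥ x) r

theorem hankelMatrix_map {S : Type*} [CommRing S] (f : R →+* S) (A : Matrix ι ι R) (x : ι → R)
    (r : ι) (m : ℕ) : (hankelMatrix A x r m).map f = hankelMatrix (A.map f) (f ∘ x) r m := by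
  ext a b
  simp [hankelMatrix, RingHom.map_mulVec, Matrix.map_pow]

theorem det_hankelMatrix_ne_zero_of_map {S : Type*} [CommRing S] (f : R →+* S)
    {A : Matrix ι ι R} {x : ι → R} {r : ι} {m : ℕ}
    (h : (hankelMatrix (A.map f) (f ∘ x) r m).det ≠ 0) : (hankelMatrix A x r m).det ≠ 0 := by
  rw [← hankelMatrix_map, ← RingHom.mapMatrix_apply, ← RingHom.map_det] at h
  exact fun h0 => h (by rw [h0, map_zero])

theorem pow_mulVec_sum_of_mulVec_eq_smul {κ : Type*} [Fintype κ] {B : Matrix ι ι R}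
    {p : κ → ι → R} {T : κ → R} (hp : ∀ i, B *ᵥ p i = T i • p i) (k : ℕ) :
    B ^ k *ᵥ ∑ i, p i = ∑ i, T i ^ k • p i := by
  induction k with
  | zero => simp
  | succ k ih =>
    rw [pow_succ', ← mulVec_mulVec, ih, mulVec_sum]
    simp only [mulVec_smul, hp, smul_smul, pow_succ]

theorem hankelMatrix_sum_of_mulVec_eq_smul {m : ℕ} {B : Matrix ι ι R} {p : Fin m → ι → R}
    {T : Fin m → R} (hp : ∀ i, B *ᵥ p i = T i • p i) (r : ι) :
    hankelMatrix B (∑ i, p i) r m =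
      (vandermonde T)ᵀ * diagonal (fun i => p i r) * vandermonde T := by
  ext a b
  rw [mul_apply]
  simp only [hankelMatrix, of_apply, pow_mulVec_sum_of_mulVec_eq_smul hp, mul_diagonal,
    transpose_apply, vandermonde_apply, Finset.sum_apply, Pi.smul_apply, smul_eq_mul]
  refine sum_congr rfl fun i _ => ?_
  ring

theorem det_hankelMatrix_sum_of_mulVec_eq_smul {m : ℕ} {B : Matrix ι ι R} {p : Fin m → ι → R}
    {T : Fin m → R} (hp : ∀ i, B *ᵥ p i = T i • p i) (r : ι) :
    (hankelMatrix B (∑ i, p i) r m).det = (vandermonde T).det ^ 2 * ∏ i, p i r := by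
  rw [hankelMatrix_sum_of_mulVec_eq_smul hp, det_mul, det_mul, det_transpose, det_diagonal]
  ring

end Hankel

section Chain

variable {K M : Type*} [Field K] [AddCommGroup M] [Module K M]

def chainCoeff (s : ℕ → K) (k : ℕ) : K := ∏ j ∈ range k, (s 0 - s (j + 1))⁻¹

theorem chainCoeff_succ_mul {s : ℕ → K} {k : ℕ} (h : s (k + 1) ≠ s 0) :
    chainCoeff s (k + 1) * (s 0 - s (k + 1)) = chainCoeff s k := by
  rw [chainCoeff, prod_range_succ, mul_assoc, inv_mul_cancel₀ (sub_ne_zero.2 h.symm), mul_one]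
  rfl

theorem chainCoeff_ne_zero {s : ℕ → K} {d : ℕ} (hs : ∀ k < d, s (k + 1) ≠ s 0) :
    chainCoeff s d ≠ 0 :=
  prod_ne_zero_iff.2 fun k hk => inv_ne_zero (sub_ne_zero.2 (hs k (mem_range.1 hk)).symm)

theorem map_sum_chainCoeff_smul {f : M →ₗ[K] M} {w : ℕ → M} {s : ℕ → K} {d : ℕ}
    (hstep : ∀ k < d, f (w k) = s k • w k + w (k + 1)) (hlast : f (w d) = s d • w d)
    (hs : ∀ k < d, s (k + 1) ≠ s 0) :
    f (∑ k ∈ range (d + 1), chainCoeff s k • w k) =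
      s 0 • ∑ k ∈ range (d + 1), chainCoeff s k • w k := by
  set c := chainCoeff s
  have hshift : ∑ k ∈ range d, c k • w (k + 1) =
      ∑ k ∈ range (d + 1), (c k * (s 0 - s k)) • w k := by
    rw [sum_range_succ' _ d, sub_self, mul_zero, zero_smul, add_zero]
    exact sum_congr rfl fun k hk => by rw [chainCoeff_succ_mul (hs k (mem_range.1 hk))]
  calc f (∑ k ∈ range (d + 1), c k • w k)
      = ∑ k ∈ range (d + 1), (c k * s k) • w k + ∑ k ∈ range d, c k • w (k + 1) := by
        rw [map_sum, sum_range_succ, sum_range_succ, map_smul, hlast, smul_smul,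
          add_right_comm, ← sum_add_distrib]
        congr 1
        exact sum_congr rfl fun k hk => by
          rw [map_smul, hstep k (mem_range.1 hk), smul_add, smul_smul]
    _ = s 0 • ∑ k ∈ range (d + 1), c k • w k := by
        rw [hshift, ← sum_add_distrib, smul_sum]
        exact sum_congr rfl fun k _ => by rw [← add_smul, smul_smul]; ring_nf

end Chain

section SpanningTree

variable {V : Type*} {E : V → V → Prop} {r : V}

structure InTree (E : V → V → Prop) (r : V) where
  parent : V → V
  depth : V → ℕ
  depth_eq_zero_iff : ∀ v, depth v = 0 ↔ v = r
  adj_parent : ∀ v, v ≠ r → E v (parent v)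
  depth_parent : ∀ v, v ≠ r → depth (parent v) + 1 = depth v

def ReachesWithin (E : V → V → Prop) (r : V) : ℕ → V → Prop
  | 0, v => v = r
  | k + 1, v => v = r ∨ ∃ u, E v u ∧ ReachesWithin E r k u

theorem exists_reachesWithin {v : V} (h : Relation.ReflTransGen E v r) :
    ∃ k, ReachesWithin E r k v := by
  induction h using Relation.ReflTransGen.head_induction_on with
  | refl => exact ⟨0, rfl⟩
  | head hvu _ ih =>
    obtain ⟨k, hk⟩ := ih
    exact ⟨k + 1, Or.inr ⟨_, hvu, hk⟩⟩

theorem InTree.nonempty_of_reflTransGen (h : ∀ v, Relation.ReflTransGen E v r) :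
    Nonempty (InTree E r) := by
  classical
  have hex : ∀ v, ∃ k, ReachesWithin E r k v := fun v => exists_reachesWithin (h v)
  let depth v := Nat.find (hex v)
  have hreach v : ReachesWithin E r (depth v) v := Nat.find_spec (hex v)
  have hdepth_zero v : depth v = 0 ↔ v = r := by
    refine ⟨fun h0 => ?_, fun hv => Nat.le_zero.1 (Nat.find_le (by exact hv))⟩
    simpa [h0, ReachesWithin] using hreach v
  have hstep v (hv : v ≠ r) : ∃ u, E v u ∧ depth u + 1 = depth v := by
    obtain ⟨k, hk⟩ := Nat.exists_eq_succ_of_ne_zero (mt (hdepth_zero v).1 hv)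
    have hvk := hreach v
    rw [hk] at hvk
    obtain ⟨u, hvu, hu⟩ := hvk.resolve_left hv
    have hle : depth v ≤ depth u + 1 := Nat.find_le (Or.inr ⟨u, hvu, hreach u⟩)
    have hge : depth u ≤ k := Nat.find_le hu
    exact ⟨u, hvu, by omega⟩
  choose! parent hparent using hstep
  exact ⟨⟨parent, depth, hdepth_zero, fun v hv => (hparent v hv).1,
    fun v hv => (hparent v hv).2⟩⟩

namespace InTree

variable (t : InTree E r)

theorem depth_root : t.depth r = 0 := (t.depth_eq_zero_iff r).2 rfl

theorem depth_iterate_parent_add {v : V} {k : ℕ} (hk : k ≤ t.depth v) :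
    t.depth (t.parent^[k] v) + k = t.depth v := by
  induction k with
  | zero => rfl
  | succ k ih =>
    have hne : t.parent^[k] v ≠ r := fun h => by
      have := ih (by omega)
      rw [h, t.depth_root] at this
      omega
    rw [Function.iterate_succ_apply', ← ih (by omega), ← t.depth_parent _ hne]
    omega

theorem iterate_parent_depth (v : V) : t.parent^[t.depth v] v = r :=
  (t.depth_eq_zero_iff _).1 (by have := t.depth_iterate_parent_add (le_refl (t.depth v)); omega)

theorem iterate_parent_ne_root {v : V} {k : ℕ} (hk : k < t.depth v) : t.parent^[k] v ≠ r := by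
  intro h
  have := t.depth_iterate_parent_add hk.le
  rw [h, t.depth_root] at this
  omega

theorem iterate_parent_succ_ne {v : V} {k : ℕ} (hk : k < t.depth v) :
    t.parent^[k + 1] v ≠ v := by
  intro h
  have := t.depth_iterate_parent_add (Nat.succ_le_of_lt hk)
  rw [h] at this
  omega

section Eigenvector

variable {K : Type*} [Field K] [DecidableEq V] (T : V → K)

def toMatrix : Matrix V V K :=
  diagonal T + of fun u v => if v ≠ r ∧ t.parent v = u then 1 else 0

theorem toMatrix_eq_zero_of_not_adj (hloop : ∀ v, E v v) {u v : V} (h : ¬E v u) :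
    t.toMatrix T u v = 0 := by
  have huv : u ≠ v := by rintro rfl; exact h (hloop u)
  have htree : ¬(v ≠ r ∧ t.parent v = u) := by rintro ⟨hv, rfl⟩; exact h (t.adj_parent v hv)
  simp [toMatrix, huv, htree]

def eigenvector (i : V) : V → K :=
  ∑ k ∈ range (t.depth i + 1),
    chainCoeff (fun j => T (t.parent^[j] i)) k • Pi.single (t.parent^[k] i) 1

theorem eigenvector_root_ne_zero {T : V → K} (hT : Function.Injective T) (i : V) :
    t.eigenvector T i r ≠ 0 := by
  rw [eigenvector, Finset.sum_apply, sum_eq_single_of_mem (t.depth i) (self_mem_range_succ _)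
    fun k hk hne => ?_]
  · simpa [t.iterate_parent_depth i] using
      chainCoeff_ne_zero fun k hk => hT.ne (t.iterate_parent_succ_ne hk)
  · have hk' : k < t.depth i := by have := mem_range.1 hk; omega
    simp [t.iterate_parent_ne_root hk']

variable [Fintype V]

theorem toMatrix_mulVec_single (v : V) :
    t.toMatrix T *ᵥ Pi.single v 1 =
      T v • Pi.single v 1 + if v = r then 0 else Pi.single (t.parent v) 1 := by
  ext u
  rw [mulVec_single_one]
  simp only [col_apply, toMatrix, Matrix.add_apply, diagonal_apply, of_apply, Pi.add_apply,
    Pi.smul_apply, ite_apply, Pi.zero_apply, Pi.single_apply, smul_eq_mul, mul_ite, mul_one,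
    mul_zero]
  split_ifs <;> grind

theorem toMatrix_mulVec_eigenvector {T : V → K} (hT : Function.Injective T) (i : V) :
    t.toMatrix T *ᵥ t.eigenvector T i = T i • t.eigenvector T i := by
  refine map_sum_chainCoeff_smul (f := (t.toMatrix T).mulVecLin) (fun k hk => ?_) ?_
    fun k hk => hT.ne (t.iterate_parent_succ_ne hk)
  · rw [mulVecLin_apply, toMatrix_mulVec_single, if_neg (t.iterate_parent_ne_root hk),
      Function.iterate_succ_apply']
  · rw [mulVecLin_apply, toMatrix_mulVec_single, if_pos (t.iterate_parent_depth i), add_zero]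

theorem det_hankelMatrix_ne_zero {n : ℕ} {E : Fin n → Fin n → Prop} {r : Fin n}
    (t : InTree E r) {T : Fin n → K} (hT : Function.Injective T) :
    (hankelMatrix (t.toMatrix T) (∑ i, t.eigenvector T i) r n).det ≠ 0 := by
  rw [det_hankelMatrix_sum_of_mulVec_eq_smul (t.toMatrix_mulVec_eigenvector hT) r]
  exact mul_ne_zero (pow_ne_zero _ (det_vandermonde_ne_zero_iff.2 hT))
    (prod_ne_zero_iff.2 fun i _ => t.eigenvector_root_ne_zero hT i)

end Eigenvector

end InTree

end SpanningTree

section TotalDegree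

variable {σ R ι : Type*} [CommRing R] [Fintype ι]

theorem totalDegree_mulVec_le {A : Matrix ι ι (MvPolynomial σ R)} {x : ι → MvPolynomial σ R}
    {d e : ℕ} (hA : ∀ i j, (A i j).totalDegree ≤ d) (hx : ∀ i, (x i).totalDegree ≤ e) (i : ι) :
    ((A *ᵥ x) i).totalDegree ≤ d + e :=
  (MvPolynomial.totalDegree_finsetSum _ _).trans <| Finset.sup_le fun j _ =>
    (MvPolynomial.totalDegree_mul _ _).trans (add_le_add (hA i j) (hx j))

variable [DecidableEq ι]

theorem totalDegree_det_le (M : Matrix ι ι (MvPolynomial σ R)) (a b : ι → ℕ)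
    (h : ∀ i j, (M i j).totalDegree ≤ a i + b j) :
    M.det.totalDegree ≤ ∑ i, a i + ∑ j, b j := by
  rw [det_apply]
  refine (MvPolynomial.totalDegree_finsetSum _ _).trans (Finset.sup_le fun e _ => ?_)
  refine (MvPolynomial.totalDegree_smul_le _ _).trans
    ((MvPolynomial.totalDegree_finsetProd _ _).trans ?_)
  calc ∑ i, (M (e i) i).totalDegree ≤ ∑ i, (a (e i) + b i) := sum_le_sum fun i _ => h _ _
    _ = ∑ i, a i + ∑ j, b j := by rw [sum_add_distrib, Equiv.sum_comp e a]

theorem totalDegree_pow_mulVec_le {A : Matrix ι ι (MvPolynomial σ R)} {x : ι → MvPolynomial σ R}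
    {d e : ℕ} (hA : ∀ i j, (A i j).totalDegree ≤ d) (hx : ∀ i, (x i).totalDegree ≤ e) (k : ℕ) :
    ∀ i, ((A ^ k *ᵥ x) i).totalDegree ≤ k * d + e := by
  induction k with
  | zero => simpa using hx
  | succ k ih =>
    rw [pow_succ', ← mulVec_mulVec, add_mul, one_mul, add_comm _ d, add_assoc]
    exact totalDegree_mulVec_le hA ih

theorem totalDegree_det_hankelMatrix_le {n : ℕ} {A : Matrix ι ι (MvPolynomial σ R)}
    {x : ι → MvPolynomial σ R} (hA : ∀ i j, (A i j).totalDegree ≤ 1)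
    (hx : ∀ i, (x i).totalDegree ≤ 1) (r : ι) :
    (hankelMatrix A x r n).det.totalDegree ≤ n ^ 2 := by
  refine (totalDegree_det_le _ (fun a : Fin n => (a : ℕ)) (fun b => b + 1)
    fun a b => ?_).trans_eq ?_
  · simpa [hankelMatrix, add_assoc] using totalDegree_pow_mulVec_le hA hx (a + b) r
  · have hodd : ∀ m, ∑ i ∈ range m, (i + (i + 1)) = m ^ 2 := fun m => by
      induction m with
      | zero => rfl
      | succ m ih => rw [sum_range_succ, ih]; ring
    rw [← sum_add_distrib, Fin.sum_univ_eq_sum_range (fun i => i + (i + 1)), hodd]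

end TotalDegree

theorem hankel_det_ne_zero_totalDegree_le_general {n : ℕ} {F : Type*} [Field F]
    (E : Fin n → Fin n → Prop) [DecidableRel E]
    (hconn : ∀ u v : Fin n, Relation.ReflTransGen E u v)
    (hloop : ∀ v : Fin n, E v v)
    (A : Matrix (Fin n) (Fin n)
      (MvPolynomial ({p : Fin n × Fin n // E p.1 p.2} ⊕ Fin n) F))
    (hA : ∀ u v : Fin n, A u v =
      if h : E v u then MvPolynomial.X (Sum.inl ⟨(v, u), h⟩) else 0)
    (x : Fin n → MvPolynomial ({p : Fin n × Fin n // E p.1 p.2} ⊕ Fin n) F)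
    (hx : ∀ i : Fin n, x i = MvPolynomial.X (Sum.inr i))
    (r : Fin n) :
    (Matrix.det (Matrix.of fun a b : Fin n =>
        ((A ^ ((a : ℕ) + (b : ℕ))) *ᵥ x) r)) ≠ 0 ∧
    (Matrix.det (Matrix.of fun a b : Fin n =>
        ((A ^ ((a : ℕ) + (b : ℕ))) *ᵥ x) r)).totalDegree ≤ n ^ 2 := by
  change (hankelMatrix A x r n).det ≠ 0 ∧ (hankelMatrix A x r n).det.totalDegree ≤ n ^ 2
  constructor
  · let K := FractionRing (MvPolynomial (Fin n) F)
    let T : Fin n → K := fun i => algebraMap (MvPolynomial (Fin n) F) K (MvPolynomial.X i)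
    have hT : Function.Injective T :=
      (IsFractionRing.injective _ K).comp (MvPolynomial.X_injective (σ := Fin n) (R := F))
    obtain ⟨t⟩ := InTree.nonempty_of_reflTransGen fun v => hconn v r
    let y := ∑ i, t.eigenvector T i
    let φ := MvPolynomial.eval₂Hom (algebraMap F K)
      (Sum.elim (fun e : {p : Fin n × Fin n // E p.1 p.2} => t.toMatrix T e.1.2 e.1.1) y)
    have hAφ : A.map φ = t.toMatrix T := by
      ext u v
      rw [map_apply, hA]
      split_ifs with h
      · simp [φ]
      · rw [map_zero, t.toMatrix_eq_zero_of_not_adj T hloop h]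
    have hxφ : φ ∘ x = y := funext fun i => by simp [φ, hx]
    refine det_hankelMatrix_ne_zero_of_map φ ?_
    rw [hAφ, hxφ]
    exact t.det_hankelMatrix_ne_zero hT
  · refine totalDegree_det_hankelMatrix_le (fun u v => ?_) (fun i => by simp [hx]) r
    rw [hA]
    split_ifs <;> simp

/-- For a strongly connected digraph `E` with self-loops (`E v u` meaning an edge from
`v` to `u`), view the edge weights `λ_e` and the entries `ξ_i` of the initial state as
free variables of the polynomial ring `R = F[λ, ξ]`.  With `A u v = λ_(v,u)` for edges
and `0` otherwise and `x i = ξ_i`, the determinant of the `n × n` Hankel matrix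
`H_n^(r)` with entries `(A^(a+b-2) x)_r` is a nonzero polynomial of total degree at
most `n²`, over any field `F` with at least `n + 1` elements. -/
theorem hankel_det_ne_zero_totalDegree_le {n : ℕ} {F : Type*} [Field F]
    (hcard : Nonempty (Fin (n + 1) ↪ F))
    (E : Fin n → Fin n → Prop) [DecidableRel E]
    (hconn : ∀ u v : Fin n, Relation.ReflTransGen E u v)
    (hloop : ∀ v : Fin n, E v v)
    (A : Matrix (Fin n) (Fin n)
      (MvPolynomial ({p : Fin n × Fin n // E p.1 p.2} ⊕ Fin n) F))
    (hA : ∀ u v : Fin n, A u v =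
      if h : E v u then MvPolynomial.X (Sum.inl ⟨(v, u), h⟩) else 0)
    (x : Fin n → MvPolynomial ({p : Fin n × Fin n // E p.1 p.2} ⊕ Fin n) F)
    (hx : ∀ i : Fin n, x i = MvPolynomial.X (Sum.inr i))
    (r : Fin n) :
    (Matrix.det (Matrix.of fun a b : Fin n =>
        ((A ^ ((a : ℕ) + (b : ℕ))) *ᵥ x) r)) ≠ 0 ∧
    (Matrix.det (Matrix.of fun a b : Fin n =>
        ((A ^ ((a : ℕ) + (b : ℕ))) *ᵥ x) r)).totalDegree ≤ n ^ 2 :=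
  hankel_det_ne_zero_totalDegree_le_general E hconn hloop A hA x hx r
end

section
/- Let G be a strongly connected directed graph on n vertices with self-loops, A a matrix consistent with G whose nonzero entries and initial vector x are real-valued random variables with a jointly absolutely continuous distribution on ℝ^{m+n}. Then with probability one, for every r, the n×n Hankel matrix H_n^{(r)} with entries (A^{a+b-2} x)_r is invertible. -/
open Matrix MeasureTheory

/-- The matrix built from a weight assignment `w` on the edges of the graph `E`
(`E v u` meaning there is an edge from `v` to `u`): the entry `A u v` is the weight
of the edge `(v, u)` if it exists, and `0` otherwise. -/
def graphMat {n : ℕ} (E : Fin n → Fin n → Prop) [DecidableRel E]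
    (w : {p : Fin n × Fin n // E p.1 p.2} → ℝ) : Matrix (Fin n) (Fin n) ℝ :=
  Matrix.of fun u v => if h : E v u then w ⟨(v, u), h⟩ else 0

lemma meas_eval {ι : Type*} [Fintype ι] (p : MvPolynomial ι ℝ) :
    Measurable fun x : ι → ℝ => MvPolynomial.eval x p :=
  (MvPolynomial.continuous_eval p).measurable

lemma mvpoly_zero_set_fin : ∀ (k : ℕ) (p : MvPolynomial (Fin k) ℝ), p ≠ 0 →
    volume {x : Fin k → ℝ | MvPolynomial.eval x p = 0} = 0 := by
  intro k
  induction k with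
  | zero =>
    intro p hp
    obtain ⟨c, rfl⟩ := MvPolynomial.C_surjective (Fin 0) p
    have hc : c ≠ 0 := fun h => hp (by simp [h])
    convert measure_empty (μ := (volume : Measure (Fin 0 → ℝ)))
    ext x
    simp [hc]
  | succ k ih =>
    intro p hp
    set q := MvPolynomial.finSuccEquiv ℝ k p with hq
    have hq0 : q ≠ 0 := by
      simp only [hq, Ne, EmbeddingLike.map_eq_zero_iff]; exact hp
    obtain ⟨i₀, hi₀⟩ : ∃ i, q.coeff i ≠ 0 := by
      by_contra h; push_neg at h; exact hq0 (Polynomial.ext fun i => by simp [h i])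
    set e := MeasurableEquiv.piFinSuccAbove (fun _ : Fin (k + 1) => ℝ) 0 with he
    have hmp : MeasurePreserving e volume volume :=
      volume_preserving_piFinSuccAbove (fun _ : Fin (k + 1) => ℝ) 0
    set B' : Set ((Fin k → ℝ) × ℝ) :=
      {z | Polynomial.eval z.2 (Polynomial.map (MvPolynomial.eval z.1) q) = 0} with hB'def
    have hB'eq : ∀ z : (Fin k → ℝ) × ℝ,
        (Polynomial.eval z.2 (Polynomial.map (MvPolynomial.eval z.1) q)
          = MvPolynomial.eval (Fin.cons z.2 z.1) p) := by
      intro z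
      rw [MvPolynomial.eval_eq_eval_mv_eval']
    have hmeasB' : MeasurableSet B' := by
      have : B' = (fun z : (Fin k → ℝ) × ℝ => MvPolynomial.eval (Fin.cons z.2 z.1) p) ⁻¹' {0} := by
        ext z; simp [hB'def, hB'eq z]
      rw [this]
      refine Measurable.comp (meas_eval p) ?_ (measurableSet_singleton 0)
      refine measurable_pi_lambda _ fun i => ?_
      refine Fin.cases ?_ (fun j => ?_) i
      · exact measurable_snd
      · simp only [Fin.cons_succ]
        exact (measurable_pi_apply j).comp measurable_fst
    have hslice : (volume.prod volume) B' = 0 := by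
      rw [Measure.measure_prod_null hmeasB']
      rw [Filter.EventuallyEq, ae_iff]
      simp only [Pi.zero_apply]
      have hZ : volume {y : Fin k → ℝ | MvPolynomial.eval y (q.coeff i₀) = 0} = 0 :=
        ih _ hi₀
      refine measure_mono_null (fun y hy => ?_) hZ
      simp only [Set.mem_setOf_eq] at hy ⊢
      by_contra hy0
      apply hy
      have hQy : Polynomial.map (MvPolynomial.eval y) q ≠ 0 := by
        intro h
        apply hy0
        have := congrArg (fun r => Polynomial.coeff r i₀) h
        simpa [Polynomial.coeff_map] using this
      have hfin : Set.Finite {t : ℝ | Polynomial.IsRoot (Polynomial.map (MvPolynomial.eval y) q) t} :=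
        Polynomial.finite_setOf_isRoot hQy
      refine measure_mono_null (fun t ht => ?_) (hfin.measure_zero volume)
      exact ht
    have hS : {x : Fin (k+1) → ℝ | MvPolynomial.eval x p = 0}
        = e ⁻¹' (Prod.swap ⁻¹' B') := by
      ext x
      have hex : e x = (x 0, fun j : Fin k => x j.succ) := by
        simp only [he, MeasurableEquiv.piFinSuccAbove_apply, Fin.removeNth,
          Fin.zero_succAbove]
        rfl
      have hcons : (Fin.cons (x 0) fun j : Fin k => x j.succ) = x :=
        funext fun i => by refine Fin.cases ?_ (fun j => ?_) i <;> simp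
      have h2 := hB'eq (fun j : Fin k => x j.succ, x 0)
      simp only at h2
      rw [hcons] at h2
      simp only [Set.mem_preimage, Set.mem_setOf_eq, hex, Prod.swap, hB'def]
      rw [h2]
    rw [hS]
    have hswapmeas : MeasurableSet (Prod.swap ⁻¹' B' : Set (ℝ × (Fin k → ℝ))) :=
      hmeasB'.preimage measurable_swap
    rw [hmp.measure_preimage hswapmeas.nullMeasurableSet]
    rw [Measure.volume_eq_prod, ← Measure.prod_swap]
    rw [Measure.map_apply measurable_swap hswapmeas]
    simpa [Set.preimage_preimage] using hslice

lemma mvpoly_zero_set {ι : Type*} [Fintype ι] (p : MvPolynomial ι ℝ) (hp : p ≠ 0) :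
    volume {x : ι → ℝ | MvPolynomial.eval x p = 0} = 0 := by
  classical
  set e := Fintype.equivFin ι with he
  have F := MeasureTheory.volume_measurePreserving_piCongrLeft (fun _ : ι => ℝ) e.symm
  have hco : ⇑(MeasurableEquiv.piCongrLeft (fun _ : ι => ℝ) e.symm)
      = fun g : Fin (Fintype.card ι) → ℝ => g ∘ e := by
    funext g
    funext i
    simp [MeasurableEquiv.piCongrLeft, Equiv.piCongrLeft, Equiv.piCongrLeft']
  have hpre : (MeasurableEquiv.piCongrLeft (fun _ : ι => ℝ) e.symm) ⁻¹'
      {x : ι → ℝ | MvPolynomial.eval x p = 0}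
      = {g : Fin (Fintype.card ι) → ℝ | MvPolynomial.eval g (MvPolynomial.rename e p) = 0} := by
    ext g
    simp [hco, MvPolynomial.eval_rename]
  have hmeas : MeasurableSet {x : ι → ℝ | MvPolynomial.eval x p = 0} :=
    (meas_eval p) (measurableSet_singleton 0)
  rw [← F.measure_preimage hmeas.nullMeasurableSet, hpre]
  refine mvpoly_zero_set_fin _ _ (fun h => hp ?_)
  exact (MvPolynomial.rename_injective (⇑e) e.injective) (by rw [h, map_zero])



def reachIn {n : ℕ} (E : Fin n → Fin n → Prop) (r : Fin n) : ℕ → Fin n → Prop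
  | 0, v => v = r
  | k+1, v => ∃ u, E v u ∧ reachIn E r k u

lemma reachIn_exists {n : ℕ} {E : Fin n → Fin n → Prop} {r v : Fin n}
    (h : Relation.ReflTransGen E v r) : ∃ k, reachIn E r k v := by
  induction h using Relation.ReflTransGen.head_induction_on with
  | refl => exact ⟨0, rfl⟩
  | head hab _ ih =>
    obtain ⟨k, hk⟩ := ih
    exact ⟨k + 1, _, hab, hk⟩

lemma hankel_witness {n : ℕ} (E : Fin n → Fin n → Prop) [DecidableRel E]
    (hconn : ∀ u v : Fin n, Relation.ReflTransGen E u v)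
    (hloop : ∀ v : Fin n, E v v) (r : Fin n) :
    ∃ ω : ({p : Fin n × Fin n // E p.1 p.2} → ℝ) × (Fin n → ℝ),
      (Matrix.det (Matrix.of fun a b : Fin n =>
        ((graphMat E ω.1 ^ ((a : ℕ) + (b : ℕ))) *ᵥ ω.2) r)) ≠ 0 := by
  classical
  have hre : ∀ v, ∃ k, reachIn E r k v := fun v => reachIn_exists (hconn v r)
  set ℓ : Fin n → ℕ := fun v => Nat.find (hre v) with hℓ
  have hℓ0 : ∀ v, ℓ v = 0 → v = r := by
    intro v h0
    have h2 : reachIn E r (ℓ v) v := Nat.find_spec (hre v)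
    rw [h0] at h2
    exact h2
  have hℓr : ℓ r = 0 := by
    have : reachIn E r 0 r := rfl
    exact Nat.eq_zero_of_le_zero (Nat.find_le this)
  have key : ∀ v, v ≠ r → ∃ u, E v u ∧ ℓ u < ℓ v := by
    intro v hv
    have h1 : ℓ v ≠ 0 := fun h0 => hv (hℓ0 v h0)
    have h2 : reachIn E r (ℓ v) v := Nat.find_spec (hre v)
    obtain ⟨m, hm⟩ : ∃ m, ℓ v = m + 1 := ⟨ℓ v - 1, by omega⟩
    rw [hm] at h2
    obtain ⟨u, hEu, hu⟩ := h2
    exact ⟨u, hEu, lt_of_le_of_lt (Nat.find_le hu) (by omega)⟩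
  choose pf hp1 hp2 using key
  set p : Fin n → Fin n := fun v => if h : v = r then r else pf v h with hpdef
  have hpE : ∀ v, E v (p v) := by
    intro v
    by_cases h : v = r
    · simp only [hpdef, dif_pos h]; rw [h]; exact hloop r
    · simp only [hpdef, dif_neg h]; exact hp1 v h
  have hpl : ∀ v, v ≠ r → ℓ (p v) < ℓ v := by
    intro v h
    simp only [hpdef, dif_neg h]; exact hp2 v h
  have hpr : p r = r := by simp [hpdef]
  -- every vertex reaches r along p
  have hLex : ∀ v, ∃ j, p^[j] v = r := by
    have : ∀ k v, ℓ v ≤ k → ∃ j, p^[j] v = r := by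
      intro k
      induction k with
      | zero => exact fun v hv => ⟨0, hℓ0 v (Nat.le_zero.1 hv)⟩
      | succ m ih =>
        intro v hv
        by_cases h : v = r
        · exact ⟨0, h⟩
        · obtain ⟨j, hj⟩ := ih (p v) (by have := hpl v h; omega)
          exact ⟨j + 1, by rwa [Function.iterate_succ_apply]⟩
    exact fun v => this (ℓ v) v le_rfl
  set L : Fin n → ℕ := fun v => Nat.find (hLex v) with hLdef
  have hLspec : ∀ v, p^[L v] v = r := fun v => Nat.find_spec (hLex v)
  have hLmin : ∀ v j, j < L v → p^[j] v ≠ r := fun v j hj => Nat.find_min (hLex v) hj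
  -- strict decrease of ℓ along the chain
  have hchain : ∀ u j, j < L u → ℓ (p^[j + 1] u) < ℓ (p^[j] u) := by
    intro u j hj
    rw [Function.iterate_succ_apply']
    exact hpl _ (hLmin u j hj)
  have hstrict : ∀ u i j, i < j → j ≤ L u → ℓ (p^[j] u) < ℓ (p^[i] u) := by
    intro u i j hij hj
    induction j with
    | zero => omega
    | succ m ih =>
      rcases Nat.lt_or_ge i m with h | h
      · exact lt_trans (hchain u m (by omega)) (ih (by omega) (by omega))
      · have : i = m := by omega
        subst this
        exact hchain u i (by omega)
  have hinj : ∀ u i j, i ≤ L u → j ≤ L u → p^[i] u = p^[j] u → i = j := by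
    intro u i j hi hj hij
    by_contra hne
    rcases Nat.lt_or_ge i j with h | h
    · exact absurd (hij ▸ hstrict u i j h hj) (lt_irrefl _)
    · have h' : j < i := by omega
      have := hstrict u j i h' hi
      rw [hij] at this
      exact absurd this (lt_irrefl _)
  -- distinct diagonal weights
  set d : Fin n → ℝ := fun v => (v : ℕ) + 1 with hddef
  have hd : Function.Injective d := by
    intro a b hab
    simp only [hddef] at hab
    have : (a : ℕ) = (b : ℕ) := by
      have h2 : ((a : ℕ) : ℝ) = ((b : ℕ) : ℝ) := by linarith
      exact_mod_cast h2
    exact Fin.ext this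
  have hdne : ∀ {a b : Fin n}, a ≠ b → d a - d b ≠ 0 :=
    fun hab => sub_ne_zero.2 (fun h => hab (hd h))
  -- chain coefficients
  set c : Fin n → ℕ → ℝ := fun u j =>
    Nat.rec (motive := fun _ => ℝ) 1 (fun i ci => ci * (d u - d (p^[i + 1] u))⁻¹) j with hcdef
  have hc0 : ∀ u, c u 0 = 1 := fun u => rfl
  have hcs : ∀ u j, c u (j + 1) = c u j * (d u - d (p^[j + 1] u))⁻¹ := fun u j => rfl
  have hne_chain : ∀ u j, 0 < j → j ≤ L u → p^[j] u ≠ u := by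
    intro u j h0 hj habs
    have : j = 0 := hinj u j 0 hj (Nat.zero_le _) (by simpa using habs)
    omega
  have hcne : ∀ u j, j ≤ L u → c u j ≠ 0 := by
    intro u j
    induction j with
    | zero => intro _; rw [hc0]; exact one_ne_zero
    | succ m ih =>
      intro hm
      rw [hcs]
      refine mul_ne_zero (ih (by omega)) (inv_ne_zero ?_)
      exact hdne (fun h => (hne_chain u (m + 1) (by omega) hm) h.symm)

  -- eigenvectors
  set vv : Fin n → Fin n → ℝ := fun u w =>
    ∑ j ∈ Finset.range (L u + 1), if p^[j] u = w then c u j else 0 with hvvdef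
  set A : Matrix (Fin n) (Fin n) ℝ := Matrix.of (fun w v =>
    (if w = v then d v else 0) + (if v ≠ r ∧ w = p v then 1 else 0)) with hAdef
  have hvv_off : ∀ u w, (∀ k, k ≤ L u → p^[k] u ≠ w) → vv u w = 0 := by
    intro u w h
    refine Finset.sum_eq_zero fun j hj => ?_
    rw [if_neg (h j (Finset.mem_range_succ_iff.1 hj))]
  have hvv_on : ∀ u k, k ≤ L u → vv u (p^[k] u) = c u k := by
    intro u k hk
    simp only [hvvdef]
    rw [Finset.sum_eq_single_of_mem k (Finset.mem_range_succ_iff.2 hk)]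
    · rw [if_pos rfl]
    · intro j hj hjk
      rw [if_neg]
      intro hEq
      exact hjk (hinj u j k (Finset.mem_range_succ_iff.1 hj) hk hEq)
  have hAv : ∀ u w, (A *ᵥ vv u) w = d u * vv u w := by
    intro u w
    have expand : (A *ᵥ vv u) w = d w * vv u w
        + ∑ v : Fin n, (if v ≠ r ∧ w = p v then 1 else 0) * vv u v := by
      simp only [Matrix.mulVec, dotProduct, hAdef, Matrix.of_apply, add_mul]
      rw [Finset.sum_add_distrib]
      congr 1
      rw [Finset.sum_eq_single_of_mem w (Finset.mem_univ w)]
      · rw [if_pos rfl]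
      · intro v _ hv
        rw [if_neg (fun h => hv h.symm), zero_mul]
    have hsum2 : ∑ v : Fin n, (if v ≠ r ∧ w = p v then 1 else 0) * vv u v
        = ∑ j ∈ Finset.range (L u + 1),
            (if p^[j] u ≠ r ∧ w = p^[j + 1] u then c u j else 0) := by
      simp only [hvvdef, Finset.mul_sum]
      rw [Finset.sum_comm]
      refine Finset.sum_congr rfl fun j _ => ?_
      have hterm : ∀ v : Fin n, (if v ≠ r ∧ w = p v then (1:ℝ) else 0)
          * (if p^[j] u = v then c u j else 0)
          = if p^[j] u = v then (if v ≠ r ∧ w = p v then (1:ℝ) else 0) * c u j else 0 := by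
        intro v
        by_cases h : p^[j] u = v <;> simp [h]
      simp only [hterm]
      rw [Finset.sum_ite_eq, if_pos (Finset.mem_univ _), Function.iterate_succ_apply']
      by_cases hcond : p^[j] u ≠ r ∧ w = p (p^[j] u)
      · rw [if_pos hcond, if_pos hcond, one_mul]
      · rw [if_neg hcond, if_neg hcond, zero_mul]
    have hjlt : ∀ j, j ≤ L u → p^[j] u ≠ r → j < L u := by
      intro j hj hjr
      rcases Nat.lt_or_ge j (L u) with h | h
      · exact h
      · exfalso; exact hjr (by rw [show j = L u by omega]; exact hLspec u)
    rw [expand, hsum2]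
    by_cases hw : ∃ k, k ≤ L u ∧ p^[k] u = w
    · obtain ⟨k, hk, hkw⟩ := hw
      subst hkw
      rw [hvv_on u k hk]
      rcases Nat.eq_zero_or_pos k with hk0 | hkpos
      · subst hk0
        have hz : (∑ j ∈ Finset.range (L u + 1),
            if p^[j] u ≠ r ∧ p^[0] u = p^[j + 1] u then c u j else 0) = 0 := by
          refine Finset.sum_eq_zero fun j hj => ?_
          rw [if_neg]
          rintro ⟨hjr, hje⟩
          have hjL : j < L u := hjlt j (Finset.mem_range_succ_iff.1 hj) hjr
          have : j + 1 = 0 := hinj u (j + 1) 0 (by omega) (Nat.zero_le _) hje.symm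
          omega
        rw [hz]
        simp
      · obtain ⟨m, rfl⟩ : ∃ m, k = m + 1 := ⟨k - 1, by omega⟩
        have hmlt : m < L u := by omega
        have hz : (∑ j ∈ Finset.range (L u + 1),
            if p^[j] u ≠ r ∧ p^[m + 1] u = p^[j + 1] u then c u j else 0) = c u m := by
          rw [Finset.sum_eq_single_of_mem m (Finset.mem_range_succ_iff.2 (by omega))]
          · rw [if_pos ⟨hLmin u m hmlt, rfl⟩]
          · intro j hj hjm
            rw [if_neg]
            rintro ⟨hjr, hje⟩
            have hjL : j < L u := hjlt j (Finset.mem_range_succ_iff.1 hj) hjr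
            exact hjm (by
              have := hinj u (j + 1) (m + 1) (by omega) (by omega) hje.symm
              omega)
        rw [hz, hcs]
        have hsne : d u - d (p^[m + 1] u) ≠ 0 :=
          hdne (fun h => (hne_chain u (m + 1) (by omega) hk) h.symm)
        have hkey : d u * (c u m * (d u - d (p^[m + 1] u))⁻¹)
            - d (p^[m + 1] u) * (c u m * (d u - d (p^[m + 1] u))⁻¹) = c u m := by
          rw [show d u * (c u m * (d u - d (p^[m + 1] u))⁻¹)
              - d (p^[m + 1] u) * (c u m * (d u - d (p^[m + 1] u))⁻¹)
              = c u m * ((d u - d (p^[m + 1] u)) * (d u - d (p^[m + 1] u))⁻¹) from by ring,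
            mul_inv_cancel₀ hsne, mul_one]
        linarith
    · push_neg at hw
      rw [hvv_off u w hw]
      rw [Finset.sum_eq_zero]
      · ring
      · intro j hj
        rw [if_neg]
        rintro ⟨hjr, hje⟩
        have hjL : j < L u := hjlt j (Finset.mem_range_succ_iff.1 hj) hjr
        exact hw (j + 1) hjL (hje.symm)
  -- powers of A on eigenvectors
  have hAk : ∀ (u : Fin n) (k : ℕ), (A ^ k) *ᵥ vv u = fun w => d u ^ k * vv u w := by
    intro u k
    induction k with
    | zero => funext w; simp [Matrix.one_mulVec]
    | succ m ih =>
      rw [pow_succ, ← Matrix.mulVec_mulVec]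
      have hAvv : A *ᵥ vv u = d u • vv u := funext fun w' => hAv u w'
      rw [hAvv, Matrix.mulVec_smul, ih]
      funext w
      simp only [Pi.smul_apply, smul_eq_mul, pow_succ]
      ring
  -- the initial vector
  set x : Fin n → ℝ := fun w => ∑ u : Fin n, vv u w with hxdef
  have hxsum : x = ∑ u : Fin n, vv u := by
    funext w
    rw [hxdef]
    simp [Finset.sum_apply]
  have hx : ∀ k : ℕ, (A ^ k) *ᵥ x = fun w => ∑ u : Fin n, d u ^ k * vv u w := by
    intro k
    funext w
    rw [hxsum]
    have : (A ^ k) *ᵥ (∑ u : Fin n, vv u) = ∑ u : Fin n, (A ^ k) *ᵥ vv u := by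
      rw [← Matrix.mulVecLin_apply, map_sum]
      simp [Matrix.mulVecLin_apply]
    rw [this]
    rw [Finset.sum_apply]
    refine Finset.sum_congr rfl fun u _ => ?_
    rw [hAk u k]
  -- nonzero coefficients
  have hccne : ∀ u, vv u r ≠ 0 := by
    intro u
    have h1 : vv u (p^[L u] u) = c u (L u) := hvv_on u (L u) le_rfl
    rw [hLspec u] at h1
    rw [h1]
    exact hcne u (L u) le_rfl
  -- Hankel factorization
  have hH : (Matrix.of fun a b : Fin n => ((A ^ ((a : ℕ) + (b : ℕ))) *ᵥ x) r)
      = (Matrix.vandermonde d)ᵀ * Matrix.diagonal (fun u => vv u r) * Matrix.vandermonde d := by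
    ext a b
    have hRHS : ((Matrix.vandermonde d)ᵀ * Matrix.diagonal (fun u => vv u r)
        * Matrix.vandermonde d) a b
        = ∑ u : Fin n, d u ^ (a : ℕ) * vv u r * d u ^ (b : ℕ) := by
      rw [Matrix.mul_apply]
      refine Finset.sum_congr rfl fun u _ => ?_
      rw [Matrix.mul_diagonal, Matrix.transpose_apply, Matrix.vandermonde_apply,
        Matrix.vandermonde_apply]
    rw [hRHS, Matrix.of_apply, hx ((a : ℕ) + (b : ℕ))]
    refine Finset.sum_congr rfl fun u _ => ?_
    rw [pow_add]
    ring
  -- the witness weights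
  set wit : {q : Fin n × Fin n // E q.1 q.2} → ℝ := fun e =>
    if e.1.2 = e.1.1 then d e.1.1
    else if e.1.1 ≠ r ∧ e.1.2 = p e.1.1 then 1 else 0 with hwitdef
  have hgm : graphMat E wit = A := by
    ext u v
    rw [graphMat, Matrix.of_apply, hAdef, Matrix.of_apply]
    by_cases hE : E v u
    · rw [dif_pos hE, hwitdef]
      simp only
      by_cases huv : u = v
      · subst huv
        have hnp : ¬(u ≠ r ∧ u = p u) := by
          rintro ⟨hur, hup⟩
          have := hpl u hur
          rw [← hup] at this
          exact lt_irrefl _ this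
        rw [if_pos rfl, if_pos rfl, if_neg hnp, add_zero]
      · rw [if_neg huv, if_neg huv, zero_add]
    · rw [dif_neg hE]
      have h1 : ¬ u = v := fun h => hE (h ▸ hloop v)
      have h2 : ¬ (v ≠ r ∧ u = p v) := fun ⟨_, h⟩ => hE (h ▸ hpE v)
      rw [if_neg h1, if_neg h2, add_zero]
  refine ⟨⟨wit, x⟩, ?_⟩
  rw [hgm, hH, Matrix.det_mul, Matrix.det_mul, Matrix.det_transpose, Matrix.det_diagonal,
    Matrix.det_vandermonde]
  refine mul_ne_zero (mul_ne_zero ?_ ?_) ?_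
  · refine Finset.prod_ne_zero_iff.2 fun i _ => Finset.prod_ne_zero_iff.2 fun j hj => ?_
    exact hdne (Fin.ne_of_gt (Finset.mem_Ioi.1 hj))
  · exact Finset.prod_ne_zero_iff.2 fun u _ => hccne u
  · refine Finset.prod_ne_zero_iff.2 fun i _ => Finset.prod_ne_zero_iff.2 fun j hj => ?_
    exact hdne (Fin.ne_of_gt (Finset.mem_Ioi.1 hj))



noncomputable def hankelApoly {n : ℕ} (E : Fin n → Fin n → Prop) [DecidableRel E] :
    Matrix (Fin n) (Fin n) (MvPolynomial ({p : Fin n × Fin n // E p.1 p.2} ⊕ Fin n) ℝ) :=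
  Matrix.of fun u v => if h : E v u then MvPolynomial.X (Sum.inl ⟨(v, u), h⟩) else 0

noncomputable def hankelPoly {n : ℕ} (E : Fin n → Fin n → Prop) [DecidableRel E] (r : Fin n) :
    MvPolynomial ({p : Fin n × Fin n // E p.1 p.2} ⊕ Fin n) ℝ :=
  (Matrix.of fun a b : Fin n => ((hankelApoly E ^ ((a : ℕ) + (b : ℕ))) *ᵥ
    (fun v => MvPolynomial.X (Sum.inr v))) r).det

lemma eval_hankelPoly {n : ℕ} (E : Fin n → Fin n → Prop) [DecidableRel E] (r : Fin n)
    (ω : ({p : Fin n × Fin n // E p.1 p.2} → ℝ) × (Fin n → ℝ)) :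
    MvPolynomial.eval (Sum.elim ω.1 ω.2) (hankelPoly E r)
      = Matrix.det (Matrix.of fun a b : Fin n =>
          ((graphMat E ω.1 ^ ((a : ℕ) + (b : ℕ))) *ᵥ ω.2) r) := by
  classical
  set f : MvPolynomial ({p : Fin n × Fin n // E p.1 p.2} ⊕ Fin n) ℝ →+* ℝ :=
    MvPolynomial.eval (Sum.elim ω.1 ω.2) with hfdef
  have hA : (hankelApoly E).map f = graphMat E ω.1 := by
    ext u v
    rw [Matrix.map_apply, hankelApoly, graphMat, Matrix.of_apply, Matrix.of_apply]
    by_cases h : E v u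
    · rw [dif_pos h, dif_pos h, hfdef]
      simp [MvPolynomial.eval_X]
    · rw [dif_neg h, dif_neg h, map_zero]
  have hAk : ∀ k : ℕ, (hankelApoly E ^ k).map f = graphMat E ω.1 ^ k := by
    intro k
    rw [← RingHom.mapMatrix_apply, map_pow, RingHom.mapMatrix_apply, hA]
  have hmap : ∀ (k : ℕ) (i : Fin n),
      f (((hankelApoly E ^ k) *ᵥ fun v => MvPolynomial.X (Sum.inr v)) i)
        = ((graphMat E ω.1 ^ k) *ᵥ ω.2) i := by
    intro k i
    rw [Matrix.mulVec, Matrix.mulVec, dotProduct, dotProduct, map_sum]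
    refine Finset.sum_congr rfl fun j _ => ?_
    rw [_root_.map_mul]
    congr 1
    · rw [← hAk k, Matrix.map_apply]
    · rw [hfdef]; simp [MvPolynomial.eval_X]
  rw [hankelPoly, RingHom.map_det]
  congr 1
  ext a b
  rw [RingHom.mapMatrix_apply, Matrix.map_apply, Matrix.of_apply, Matrix.of_apply]
  exact hmap _ r

/-- For a strongly connected digraph with self-loops, if the edge weights of `A` and the
entries of `x` have a joint law absolutely continuous with respect to Lebesgue measure
on `ℝ^(m+n)`, then with probability one the Hankel matrices `H_n^(r)` are invertible for
every `r`. -/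
theorem hankel_invertible_ae {n : ℕ}
    (E : Fin n → Fin n → Prop) [DecidableRel E]
    (hconn : ∀ u v : Fin n, Relation.ReflTransGen E u v)
    (hloop : ∀ v : Fin n, E v v)
    (μ : Measure (({p : Fin n × Fin n // E p.1 p.2} → ℝ) × (Fin n → ℝ)))
    [IsProbabilityMeasure μ] (hac : μ ≪ volume) :
    μ {ω | ∀ r : Fin n, (Matrix.det (Matrix.of fun a b : Fin n =>
        ((graphMat E ω.1 ^ ((a : ℕ) + (b : ℕ))) *ᵥ ω.2) r)) ≠ 0} = 1 := by
  classical
  have hP : ∀ r : Fin n, hankelPoly E r ≠ 0 := by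
    intro r h0
    obtain ⟨ω, hω⟩ := hankel_witness E hconn hloop r
    apply hω
    rw [← eval_hankelPoly E r ω, h0, map_zero]
  have hN : ∀ r : Fin n,
      (volume : Measure (({p : Fin n × Fin n // E p.1 p.2} → ℝ) × (Fin n → ℝ)))
        {ω | Matrix.det (Matrix.of fun a b : Fin n =>
          ((graphMat E ω.1 ^ ((a : ℕ) + (b : ℕ))) *ᵥ ω.2) r) = 0} = 0 := by
    intro r
    set T : Set (({p : Fin n × Fin n // E p.1 p.2} ⊕ Fin n) → ℝ) :=
      {σ | MvPolynomial.eval σ (hankelPoly E r) = 0} with hTdef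
    have hT : volume T = 0 := mvpoly_zero_set _ (hP r)
    have hTmeas : MeasurableSet T := meas_eval _ (measurableSet_singleton 0)
    have hmp := volume_measurePreserving_sumPiEquivProdPi_symm
      (fun _ : {p : Fin n × Fin n // E p.1 p.2} ⊕ Fin n => ℝ)
    have hcoe : ∀ ω : ({p : Fin n × Fin n // E p.1 p.2} → ℝ) × (Fin n → ℝ),
        (MeasurableEquiv.sumPiEquivProdPi
          (fun _ : {p : Fin n × Fin n // E p.1 p.2} ⊕ Fin n => ℝ)).symm ω
          = Sum.elim ω.1 ω.2 := by
      intro ω; funext i; cases i <;> rfl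
    have hNT : {ω : ({p : Fin n × Fin n // E p.1 p.2} → ℝ) × (Fin n → ℝ) |
        Matrix.det (Matrix.of fun a b : Fin n =>
          ((graphMat E ω.1 ^ ((a : ℕ) + (b : ℕ))) *ᵥ ω.2) r) = 0}
        = (MeasurableEquiv.sumPiEquivProdPi
            (fun _ : {p : Fin n × Fin n // E p.1 p.2} ⊕ Fin n => ℝ)).symm ⁻¹' T := by
      ext ω
      simp only [Set.mem_setOf_eq, Set.mem_preimage, hTdef, hcoe ω, eval_hankelPoly E r ω]
    rw [hNT, hmp.measure_preimage hTmeas.nullMeasurableSet]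
    exact hT
  have hcompl : μ {ω : ({p : Fin n × Fin n // E p.1 p.2} → ℝ) × (Fin n → ℝ) |
      ∀ r : Fin n, (Matrix.det (Matrix.of fun a b : Fin n =>
        ((graphMat E ω.1 ^ ((a : ℕ) + (b : ℕ))) *ᵥ ω.2) r)) ≠ 0}ᶜ = 0 := by
    have hU : {ω : ({p : Fin n × Fin n // E p.1 p.2} → ℝ) × (Fin n → ℝ) |
        ∀ r : Fin n, (Matrix.det (Matrix.of fun a b : Fin n =>
          ((graphMat E ω.1 ^ ((a : ℕ) + (b : ℕ))) *ᵥ ω.2) r)) ≠ 0}ᶜ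
        = ⋃ r : Fin n, {ω | Matrix.det (Matrix.of fun a b : Fin n =>
          ((graphMat E ω.1 ^ ((a : ℕ) + (b : ℕ))) *ᵥ ω.2) r) = 0} := by
      ext ω
      simp [not_forall]
    rw [hU]
    exact measure_iUnion_null fun r => hac (hN r)
  refine le_antisymm prob_le_one ?_
  calc (1 : ENNReal) = μ Set.univ := measure_univ.symm
    _ ≤ μ {ω | ∀ r : Fin n, (Matrix.det (Matrix.of fun a b : Fin n =>
          ((graphMat E ω.1 ^ ((a : ℕ) + (b : ℕ))) *ᵥ ω.2) r)) ≠ 0}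
        + μ {ω | ∀ r : Fin n, (Matrix.det (Matrix.of fun a b : Fin n =>
          ((graphMat E ω.1 ^ ((a : ℕ) + (b : ℕ))) *ᵥ ω.2) r)) ≠ 0}ᶜ := by
        rw [← Set.union_compl_self {ω | ∀ r : Fin n, (Matrix.det (Matrix.of fun a b : Fin n =>
          ((graphMat E ω.1 ^ ((a : ℕ) + (b : ℕ))) *ᵥ ω.2) r)) ≠ 0}]
        exact measure_union_le _ _
    _ = μ {ω | ∀ r : Fin n, (Matrix.det (Matrix.of fun a b : Fin n =>
          ((graphMat E ω.1 ^ ((a : ℕ) + (b : ℕ))) *ᵥ ω.2) r)) ≠ 0} := by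
        rw [hcompl, add_zero]
end
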